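/- arXiv:1710.06332 — 5 statements merged into one kernel-verified Lean document; each statement's English description precedes it below -/
import Mathlib

section
/- Let λ ∈ ℝ, ρ ∈ (0,∞), and let a : [λ−ρ, λ+ρ] → ℝ be measurable with a(λ) finite such that |a(λ+t) − a(λ)| ≤ ω(|t|) for all 0 < |t| ≤ ρ, where ω : (0,ρ] → [0,∞) and t ↦ ω(t)/t is integrable over (0,ρ). Then the principal value p.v.∫_{λ−ρ}^{λ+ρ} a(τ)/(τ−λ) dτ exists, and for every ε > 0 and each choice of sign one has | ∫_{λ−ρ}^{λ+ρ} a(τ)/(τ−λ ∓ iε) dτ − p.v.∫_{λ−ρ}^{λ+ρ} a(τ)/(τ−λ) dτ ∓ iπ a(λ) | ≤ ∫_0^ρ (2ε/√(t²+ε²)) · (ω(t)/t) dt + (π − 2 arctan(ρ/ε)) |a(λ)|. -/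
/-!
Split `a τ = (a τ - a λ) + a λ`. The kernel `1/(τ - λ)` is odd about `λ`, so its integral over
every annulus `r < |τ - λ| < ρ` vanishes, and the principal value is the absolutely convergent
integral of `(a τ - a λ)/(τ - λ)`, which is dominated by `ω |τ - λ| / |τ - λ|`. For the shifted
kernel, `log √(t² + c²) + i arctan (t / c)` is a primitive of `1/(t - i c)`, so its integral over
`[-ρ, ρ]` is `2 i arctan (ρ / c)`; with `c = ± ε` this differs from `± i π` by the boundary term.
Finally `|1/(t - i c) - 1/t| = |c| / (|t| √(t² + c²))`, which integrated against
`|a (λ + t) - a λ| ≤ ω |t|` over the symmetric interval gives the first term.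
-/

open MeasureTheory Filter Metric Set Real
open scoped Topology

theorem norm_ofReal_sub_sub_mul_I (τ x c : ℝ) :
    ‖(τ : ℂ) - x - c * Complex.I‖ = √((τ - x) ^ 2 + c ^ 2) := by
  have h : (τ : ℂ) - x - c * Complex.I = ((τ - x : ℝ) : ℂ) + ((-c : ℝ) : ℂ) * Complex.I := by
    push_cast; ring
  rw [h, Complex.norm_add_mul_I, neg_sq]

theorem abs_sub_le_norm_ofReal_sub_sub_mul_I (τ x c : ℝ) :
    |τ - x| ≤ ‖(τ : ℂ) - x - c * Complex.I‖ := by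
  simpa using Complex.abs_re_le_norm ((τ : ℂ) - x - c * Complex.I)

theorem norm_div_ofReal_sub_sub_mul_I_sub_div (w : ℂ) {τ x : ℝ} (hτ : τ ≠ x) (c : ℝ) :
    ‖w / ((τ : ℂ) - x - c * Complex.I) - w / ((τ : ℂ) - x)‖
      = |c| / √((τ - x) ^ 2 + c ^ 2) * (‖w‖ / |τ - x|) := by
  have h₀ : (τ : ℂ) - x ≠ 0 := sub_ne_zero.2 (Complex.ofReal_injective.ne hτ)
  have hz : (τ : ℂ) - x - c * Complex.I ≠ 0 := fun h => by
    have := abs_sub_le_norm_ofReal_sub_sub_mul_I τ x c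
    rw [h, norm_zero] at this
    exact hτ (sub_eq_zero.1 (abs_nonpos_iff.1 this))
  have key : w / ((τ : ℂ) - x - c * Complex.I) - w / ((τ : ℂ) - x)
      = w * (c * Complex.I) / (((τ : ℂ) - x - c * Complex.I) * ((τ : ℂ) - x)) := by
    field_simp
    ring
  rw [key, norm_div, norm_mul, norm_mul, norm_mul, norm_ofReal_sub_sub_mul_I, Complex.norm_I,
    Complex.norm_real, Real.norm_eq_abs, ← Complex.ofReal_sub, Complex.norm_real,
    Real.norm_eq_abs]
  field_simp

theorem hasDerivAt_log_add_arctan_mul_I {c : ℝ} (hc : c ≠ 0) (t : ℝ) :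
    HasDerivAt
      (fun u : ℝ => ((Real.log (u ^ 2 + c ^ 2) / 2 : ℝ) : ℂ) + (arctan (u / c) : ℂ) * Complex.I)
      ((t : ℂ) - c * Complex.I)⁻¹ t := by
  have hpos : t ^ 2 + c ^ 2 ≠ 0 := by positivity
  have hlog :
      HasDerivAt (fun u : ℝ => Real.log (u ^ 2 + c ^ 2) / 2) (t / (t ^ 2 + c ^ 2)) t := by
    refine ((((hasDerivAt_pow 2 t).add_const (c ^ 2)).log hpos).div_const 2).congr_deriv ?_
    field_simp
    ring
  have harctan : HasDerivAt (fun u : ℝ => arctan (u / c)) (c / (t ^ 2 + c ^ 2)) t := by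
    convert ((hasDerivAt_id' t).div_const c).arctan using 1
    field_simp
    ring
  refine (hlog.ofReal_comp.add (harctan.ofReal_comp.mul_const Complex.I)).congr_deriv ?_
  refine (inv_eq_of_mul_eq_one_right ?_).symm
  have hpos' : (t : ℂ) ^ 2 + (c : ℂ) ^ 2 ≠ 0 := by exact_mod_cast hpos
  push_cast
  field_simp
  linear_combination (-(c : ℂ) ^ 2) * Complex.I_sq

theorem ofReal_sub_mul_I_ne_zero (t : ℝ) {c : ℝ} (hc : c ≠ 0) : (t : ℂ) - c * Complex.I ≠ 0 :=
  fun h => hc (by simpa using congrArg Complex.im h)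

theorem integral_inv_ofReal_sub_sub_mul_I (x ρ : ℝ) {c : ℝ} (hc : c ≠ 0) :
    ∫ τ in (x - ρ)..(x + ρ), ((τ : ℂ) - x - c * Complex.I)⁻¹
      = 2 * arctan (ρ / c) * Complex.I := by
  have hshift : ∀ τ : ℝ, ((τ : ℂ) - x - c * Complex.I)⁻¹
      = (fun t : ℝ => ((t : ℂ) - c * Complex.I)⁻¹) (τ - x) := by
    intro τ
    push_cast
    ring
  have hcont : Continuous fun t : ℝ => ((t : ℂ) - c * Complex.I)⁻¹ :=
    (Complex.continuous_ofReal.sub continuous_const).inv₀ (ofReal_sub_mul_I_ne_zero · hc)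
  rw [intervalIntegral.integral_congr (fun τ _ => hshift τ),
    intervalIntegral.integral_comp_sub_right (fun t : ℝ => ((t : ℂ) - c * Complex.I)⁻¹) x,
    add_sub_cancel_left, sub_sub_cancel_left, intervalIntegral.integral_eq_sub_of_hasDerivAt
      (fun t _ => hasDerivAt_log_add_arctan_mul_I hc t) (hcont.intervalIntegrable _ _)]
  simp only [neg_sq, neg_div, arctan_neg, Complex.ofReal_neg]
  ring

theorem norm_mul_sign_mul_two_arctan_sub_pi_mul_I {s : ℝ} (hs : |s| = 1) (w : ℂ) (y : ℝ) :
    ‖w * (s * (2 * arctan y - π) * Complex.I)‖ = (π - 2 * arctan y) * ‖w‖ := by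
  have hcast : (s : ℂ) * (2 * arctan y - π) = ((s * (2 * arctan y - π) : ℝ) : ℂ) := by
    push_cast
    ring
  have := arctan_lt_pi_div_two y
  rw [hcast, norm_mul, norm_mul, Complex.norm_I, mul_one, Complex.norm_real, Real.norm_eq_abs,
    abs_mul, hs, one_mul, abs_of_neg (by linarith), neg_sub, mul_comm]

theorem intervalIntegrable_comp_abs_sub {g : ℝ → ℝ} {ρ : ℝ} (hρ : 0 ≤ ρ)
    (hg : IntegrableOn g (Ioc 0 ρ)) (x : ℝ) :
    IntervalIntegrable (fun τ => g |τ - x|) volume (x - ρ) (x + ρ) := by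
  have h₀ : IntervalIntegrable (fun t => g |t|) volume 0 ρ := by
    rw [intervalIntegrable_iff_integrableOn_Ioc_of_le hρ]
    exact hg.congr_fun (fun t ht => by rw [abs_of_pos ht.1]) measurableSet_Ioc
  have hleft := h₀.comp_sub_left x
  have hright := h₀.comp_sub_right x
  simp only [sub_zero, zero_add, abs_sub_comm x] at hleft hright
  rw [add_comm] at hright
  exact hleft.symm.trans hright

theorem integral_comp_abs_sub (g : ℝ → ℝ) {ρ : ℝ} (hρ : 0 ≤ ρ) (x : ℝ) :
    ∫ τ in (x - ρ)..(x + ρ), g |τ - x| = 2 * ∫ t in Ioc 0 ρ, g t := by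
  have hsym :
      (Icc (-ρ) ρ).indicator (fun t => g |t|) = fun t => (Iic ρ).indicator g |t| := by
    ext t
    simp only [indicator, mem_Icc, mem_Iic, ← abs_le]
  rw [intervalIntegral.integral_comp_sub_right (fun t => g |t|), add_sub_cancel_left,
    sub_sub_cancel_left, intervalIntegral.integral_of_le (by linarith),
    ← integral_Icc_eq_integral_Ioc, ← integral_indicator measurableSet_Icc, hsym,
    integral_comp_abs, setIntegral_indicator measurableSet_Iic, Ioi_inter_Iic]

theorem integral_ball_sdiff_closedBall_inv_sub_eq_zero (x ρ r : ℝ) :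
    ∫ τ in ball x ρ \ closedBall x r, ((τ : ℂ) - x)⁻¹ = 0 := by
  -- the reflection `τ ↦ 2 x - τ` preserves Lebesgue measure and the annulus, and flips the sign
  set h := (ball x ρ \ closedBall x r).indicator fun τ : ℝ => ((τ : ℂ) - x)⁻¹
  have hodd : ∀ τ, h (2 * x - τ) = -h τ := by
    intro τ
    have hmem : 2 * x - τ ∈ ball x ρ \ closedBall x r ↔ τ ∈ ball x ρ \ closedBall x r := by
      simp only [Set.mem_sdiff, mem_ball, mem_closedBall, Real.dist_eq,
        show 2 * x - τ - x = -(τ - x) by ring, abs_neg]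
    dsimp only [h]
    by_cases hτ : τ ∈ ball x ρ \ closedBall x r
    · rw [indicator_of_mem (hmem.2 hτ), indicator_of_mem hτ, ← inv_neg]
      push_cast
      ring_nf
    · rw [indicator_of_notMem (hmem.not.2 hτ), indicator_of_notMem hτ, neg_zero]
  have := integral_sub_left_eq_self h volume (2 * x)
  simp only [hodd, integral_neg] at this
  rw [← integral_indicator (measurableSet_ball.diff measurableSet_closedBall)]
  exact neg_eq_self.1 this

theorem tendsto_setIntegral_ball_sdiff_closedBall {E : Type*} [NormedAddCommGroup E]
    [NormedSpace ℝ E] {g : ℝ → E} {x ρ : ℝ} (hg : IntegrableOn g (ball x ρ)) :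
    Tendsto (fun r => ∫ τ in ball x ρ \ closedBall x r, g τ) (𝓝[>] 0)
      (𝓝 (∫ τ in ball x ρ, g τ)) := by
  have hvol :
      Tendsto (fun r => volume.restrict (ball x ρ) (closedBall x r)) (𝓝[>] 0) (𝓝 0) := by
    have h2r : Tendsto (fun r : ℝ => ENNReal.ofReal (2 * r)) (𝓝[>] 0) (𝓝 0) := by
      have : Tendsto (fun r : ℝ => 2 * r) (𝓝[>] 0) (𝓝 0) := by
        simpa using ((continuous_const_mul (2 : ℝ)).tendsto 0).mono_left nhdsWithin_le_nhds
      simpa using ENNReal.tendsto_ofReal this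
    refine tendsto_of_tendsto_of_tendsto_of_le_of_le tendsto_const_nhds h2r
      (fun _ => bot_le) fun r => ?_
    rw [← Real.volume_closedBall]
    exact Measure.restrict_apply_le _ _
  have hsmall := hg.tendsto_setIntegral_nhds_zero hvol
  simp only [Measure.restrict_restrict measurableSet_closedBall] at hsmall
  have := tendsto_const_nhds (x := ∫ τ in ball x ρ, g τ) |>.sub hsmall
  rw [sub_zero] at this
  refine this.congr fun r => ?_
  rw [← integral_inter_add_sdiff measurableSet_closedBall hg, inter_comm, add_sub_cancel_left]

theorem tendsto_setIntegral_ball_sdiff_closedBall_div_sub (a : ℝ → ℂ) {x ρ : ℝ} (hρ : 0 ≤ ρ)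
    (hf : IntervalIntegrable (fun τ => (a τ - a x) / ((τ : ℂ) - x)) volume (x - ρ) (x + ρ)) :
    Tendsto (fun r => ∫ τ in ball x ρ \ closedBall x r, a τ / ((τ : ℂ) - x)) (𝓝[>] 0)
      (𝓝 (∫ τ in (x - ρ)..(x + ρ), (a τ - a x) / ((τ : ℂ) - x))) := by
  have hball : IntegrableOn (fun τ => (a τ - a x) / ((τ : ℂ) - x)) (ball x ρ) := by
    rw [Real.ball_eq_Ioo]
    exact ((intervalIntegrable_iff_integrableOn_Ioc_of_le (by linarith)).1 hf).mono_set
      Ioo_subset_Ioc_self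
  rw [intervalIntegral.integral_of_le (by linarith), integral_Ioc_eq_integral_Ioo,
    ← Real.ball_eq_Ioo]
  refine (tendsto_setIntegral_ball_sdiff_closedBall hball).congr' ?_
  filter_upwards [self_mem_nhdsWithin] with r (hr : 0 < r)
  have hne : ∀ τ ∉ ball x r, (τ : ℂ) - x ≠ 0 := fun τ hτ h =>
    hτ (Complex.ofReal_injective (sub_eq_zero.1 h) ▸ mem_ball_self hr)
  have hinv : IntegrableOn (fun τ : ℝ => ((τ : ℂ) - x)⁻¹) (ball x ρ \ closedBall x r) := by
    refine (ContinuousOn.integrableOn_compact ((isCompact_closedBall x ρ).diff isOpen_ball)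
      ?_).mono_set (sdiff_subset_sdiff ball_subset_closedBall ball_subset_closedBall)
    exact (Complex.continuous_ofReal.sub continuous_const).continuousOn.inv₀ fun τ hτ => hne τ hτ.2
  calc ∫ τ in ball x ρ \ closedBall x r, (a τ - a x) / ((τ : ℂ) - x)
      = (∫ τ in ball x ρ \ closedBall x r, (a τ - a x) / ((τ : ℂ) - x))
          + a x * ∫ τ in ball x ρ \ closedBall x r, ((τ : ℂ) - x)⁻¹ := by
        rw [integral_ball_sdiff_closedBall_inv_sub_eq_zero, mul_zero, add_zero]
    _ = ∫ τ in ball x ρ \ closedBall x r,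
          ((a τ - a x) / ((τ : ℂ) - x) + a x * ((τ : ℂ) - x)⁻¹) := by
        rw [integral_add (hball.mono_set sdiff_subset) (hinv.const_mul _), integral_const_mul]
    _ = ∫ τ in ball x ρ \ closedBall x r, a τ / ((τ : ℂ) - x) := by
        refine setIntegral_congr_fun (measurableSet_ball.diff measurableSet_closedBall)
          fun τ hτ => ?_
        have := hne τ (fun h => hτ.2 (ball_subset_closedBall h))
        field_simp
        ring

theorem integrableOn_abs_div_sqrt_mul {g : ℝ → ℝ} {s : Set ℝ} (hg : IntegrableOn g s) (c : ℝ) :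
    IntegrableOn (fun t => |c| / √(t ^ 2 + c ^ 2) * g t) s := by
  have hm : Measurable fun t : ℝ => |c| / √(t ^ 2 + c ^ 2) := by fun_prop
  refine hg.bdd_mul (c := 1) hm.aestronglyMeasurable (ae_of_all _ fun t => ?_)
  rw [Real.norm_eq_abs, abs_div, abs_abs, abs_of_nonneg (sqrt_nonneg _), ← sqrt_sq_eq_abs]
  exact div_le_one_of_le₀ (sqrt_le_sqrt (by nlinarith)) (sqrt_nonneg _)

section Modulus

variable {a : ℝ → ℂ} {ω : ℝ → ℝ} {x ρ : ℝ}

theorem norm_sub_div_le_modulus (hω0 : ∀ t ∈ Ioc 0 ρ, 0 ≤ ω t)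
    (hbound : ∀ t : ℝ, 0 < |t| → |t| ≤ ρ → ‖a (x + t) - a x‖ ≤ ω |t|) {τ : ℝ}
    (hτ : |τ - x| ≤ ρ) (c : ℝ) :
    ‖(a τ - a x) / ((τ : ℂ) - x - c * Complex.I)‖ ≤ ω |τ - x| / |τ - x| := by
  rcases eq_or_ne τ x with rfl | hne
  · simp -- at `τ = x` both sides are `0`, the right one because `ω 0 / 0 = 0`
  have hpos : 0 < |τ - x| := abs_pos.2 (sub_ne_zero.2 hne)
  have hτ' := hbound (τ - x) hpos hτ
  rw [add_sub_cancel] at hτ'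
  rw [norm_div]
  exact div_le_div₀ (hω0 _ ⟨hpos, hτ⟩) hτ' hpos (abs_sub_le_norm_ofReal_sub_sub_mul_I τ x c)

theorem intervalIntegrable_sub_div_sub_mul_I (hρ : 0 ≤ ρ) (ha : Measurable a)
    (hω0 : ∀ t ∈ Ioc 0 ρ, 0 ≤ ω t) (hωint : IntegrableOn (fun t => ω t / t) (Ioc 0 ρ))
    (hbound : ∀ t : ℝ, 0 < |t| → |t| ≤ ρ → ‖a (x + t) - a x‖ ≤ ω |t|) (c : ℝ) :
    IntervalIntegrable (fun τ => (a τ - a x) / ((τ : ℂ) - x - c * Complex.I)) volume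
      (x - ρ) (x + ρ) := by
  refine (intervalIntegrable_comp_abs_sub hρ hωint x).mono_fun ?_ ?_
  · exact ((ha.sub_const _).div (by fun_prop)).aestronglyMeasurable
  · rw [uIoc_of_le (by linarith)]
    refine (ae_restrict_iff' measurableSet_Ioc).2 (ae_of_all _ fun τ hτ => ?_)
    have hτρ : |τ - x| ≤ ρ := abs_le.2 ⟨by linarith [hτ.1], by linarith [hτ.2]⟩
    exact (norm_sub_div_le_modulus hω0 hbound hτρ c).trans (le_abs_self _)

theorem norm_sub_div_sub_mul_I_sub_sub_div_le
    (hbound : ∀ t : ℝ, 0 < |t| → |t| ≤ ρ → ‖a (x + t) - a x‖ ≤ ω |t|) {τ : ℝ}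
    (hτ : |τ - x| ≤ ρ) (c : ℝ) :
    ‖(a τ - a x) / ((τ : ℂ) - x - c * Complex.I) - (a τ - a x) / ((τ : ℂ) - x)‖
      ≤ |c| / √(|τ - x| ^ 2 + c ^ 2) * (ω |τ - x| / |τ - x|) := by
  rcases eq_or_ne τ x with rfl | hne
  · simp
  have hτ' := hbound (τ - x) (abs_pos.2 (sub_ne_zero.2 hne)) hτ
  rw [add_sub_cancel] at hτ'
  rw [norm_div_ofReal_sub_sub_mul_I_sub_div _ hne, sq_abs]
  exact mul_le_mul_of_nonneg_left (div_le_div_of_nonneg_right hτ' (abs_nonneg _)) (by positivity)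

theorem norm_integral_div_sub_mul_I_sub_le (hρ : 0 ≤ ρ) (ha : Measurable a)
    (hω0 : ∀ t ∈ Ioc 0 ρ, 0 ≤ ω t) (hωint : IntegrableOn (fun t => ω t / t) (Ioc 0 ρ))
    (hbound : ∀ t : ℝ, 0 < |t| → |t| ≤ ρ → ‖a (x + t) - a x‖ ≤ ω |t|) {c : ℝ} (hc : c ≠ 0) :
    ‖(∫ τ in (x - ρ)..(x + ρ), a τ / ((τ : ℂ) - x - c * Complex.I))
        - (∫ τ in (x - ρ)..(x + ρ), (a τ - a x) / ((τ : ℂ) - x))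
        - a x * (2 * arctan (ρ / c) * Complex.I)‖
      ≤ ∫ t in Ioc 0 ρ, 2 * |c| / √(t ^ 2 + c ^ 2) * (ω t / t) := by
  have hfc := intervalIntegrable_sub_div_sub_mul_I hρ ha hω0 hωint hbound c
  have hf0 := intervalIntegrable_sub_div_sub_mul_I hρ ha hω0 hωint hbound 0
  simp only [Complex.ofReal_zero, zero_mul, sub_zero] at hf0
  have hinv : IntervalIntegrable (fun τ : ℝ => a x * ((τ : ℂ) - x - c * Complex.I)⁻¹) volume
      (x - ρ) (x + ρ) := by
    refine (continuous_const.mul (Continuous.inv₀ (by fun_prop) fun τ => ?_)).intervalIntegrable _ _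
    simpa using ofReal_sub_mul_I_ne_zero (τ - x) hc
  have hsplit : ∫ τ in (x - ρ)..(x + ρ), a τ / ((τ : ℂ) - x - c * Complex.I)
      = (∫ τ in (x - ρ)..(x + ρ), (a τ - a x) / ((τ : ℂ) - x - c * Complex.I))
        + a x * (2 * arctan (ρ / c) * Complex.I) := by
    rw [← integral_inv_ofReal_sub_sub_mul_I x ρ hc, ← intervalIntegral.integral_const_mul,
      ← intervalIntegral.integral_add hfc hinv]
    congr with τ
    rw [div_eq_mul_inv, div_eq_mul_inv]
    ring
  set g : ℝ → ℝ := fun t => |c| / √(t ^ 2 + c ^ 2) * (ω t / t)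
  rw [hsplit, add_sub_right_comm, add_sub_cancel_right, ← intervalIntegral.integral_sub hfc hf0]
  calc _ ≤ ∫ τ in (x - ρ)..(x + ρ), g |τ - x| := by
        refine intervalIntegral.norm_integral_le_of_norm_le (by linarith)
          (ae_of_all _ fun τ hτ => ?_)
          (intervalIntegrable_comp_abs_sub hρ (integrableOn_abs_div_sqrt_mul hωint c) x)
        exact norm_sub_div_sub_mul_I_sub_sub_div_le hbound
          (abs_le.2 ⟨by linarith [hτ.1], by linarith [hτ.2]⟩) c
    _ = 2 * ∫ t in Ioc 0 ρ, g t := integral_comp_abs_sub g hρ x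
    _ = _ := by
        rw [← integral_const_mul]
        congr with t
        ring

end Modulus

/-- **Plemelj–Sokhotski type estimate.**
Let `λ ∈ ℝ`, `ρ ∈ (0,∞)`, and let `a : [λ−ρ, λ+ρ] → ℝ` be measurable such that
`|a(λ+t) − a(λ)| ≤ ω(|t|)` for all `0 < |t| ≤ ρ`, where `t ↦ ω(t)/t` is integrable over `(0,ρ)`.
Then the principal value `p.v.∫_{λ−ρ}^{λ+ρ} a(τ)/(τ−λ) dτ` exists, and for every `ε > 0` and each
choice of sign `s = ±1` one has
`| ∫_{λ−ρ}^{λ+ρ} a(τ)/(τ−λ − s i ε) dτ − p.v.∫_{λ−ρ}^{λ+ρ} a(τ)/(τ−λ) dτ − s iπ a(λ) |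
  ≤ ∫_0^ρ (2ε/√(t²+ε²)) (ω(t)/t) dt + (π − 2 arctan(ρ/ε)) |a(λ)|`. -/
theorem stmt0 (lam ρ : ℝ) (hρ : 0 < ρ)
    (a : ℝ → ℝ) (ha : Measurable a)
    (ω : ℝ → ℝ) (hω0 : ∀ t ∈ Set.Ioc (0:ℝ) ρ, 0 ≤ ω t)
    (hωint : IntegrableOn (fun t => ω t / t) (Set.Ioc (0:ℝ) ρ))
    (hbound : ∀ t : ℝ, 0 < |t| → |t| ≤ ρ → |a (lam + t) - a lam| ≤ ω |t|) :
    ∃ P : ℂ,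
      Tendsto (fun r : ℝ =>
          ∫ τ in {τ : ℝ | r < |τ - lam| ∧ |τ - lam| < ρ}, (a τ : ℂ) / ((τ : ℂ) - lam))
        (nhdsWithin 0 (Set.Ioi 0)) (nhds P) ∧
      ∀ ε : ℝ, 0 < ε → ∀ s : ℝ, s = 1 ∨ s = -1 →
        ‖(∫ τ in (lam - ρ)..(lam + ρ), (a τ : ℂ) / ((τ : ℂ) - lam - s * ε * Complex.I))
            - P - s * Real.pi * (a lam) * Complex.I‖
          ≤ (∫ t in Set.Ioc (0:ℝ) ρ, (2 * ε / Real.sqrt (t ^ 2 + ε ^ 2)) * (ω t / t))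
            + (Real.pi - 2 * Real.arctan (ρ / ε)) * |a lam| := by
  have haC : Measurable fun τ => (a τ : ℂ) := Complex.measurable_ofReal.comp ha
  have hboundC : ∀ t : ℝ, 0 < |t| → |t| ≤ ρ → ‖(a (lam + t) : ℂ) - a lam‖ ≤ ω |t| :=
    fun t h₁ h₂ => by rw [← Complex.ofReal_sub, Complex.norm_real]; exact hbound t h₁ h₂
  have hannulus : ∀ r, {τ : ℝ | r < |τ - lam| ∧ |τ - lam| < ρ} = ball lam ρ \ closedBall lam r :=
    fun r => by ext τ; simp [Real.dist_eq, and_comm]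
  refine ⟨∫ τ in (lam - ρ)..(lam + ρ), ((a τ : ℂ) - a lam) / ((τ : ℂ) - lam), ?_,
    fun ε hε s hs => ?_⟩
  · simp_rw [hannulus]
    refine tendsto_setIntegral_ball_sdiff_closedBall_div_sub _ hρ.le ?_
    simpa using intervalIntegrable_sub_div_sub_mul_I hρ.le haC hω0 hωint hboundC 0
  have hs_abs : |s| = 1 := by rcases hs with rfl | rfl <;> norm_num
  have hs_sq : s ^ 2 = 1 := by rw [← sq_abs, hs_abs, one_pow]
  have hsε : s * ε ≠ 0 := mul_ne_zero (abs_ne_zero.1 (hs_abs ▸ one_ne_zero)) hε.ne'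
  have harctan : arctan (ρ / (s * ε)) = s * arctan (ρ / ε) := by
    rcases hs with rfl | rfl <;> simp [div_neg, arctan_neg]
  have hmain := norm_integral_div_sub_mul_I_sub_le hρ.le haC hω0 hωint hboundC hsε
  simp only [Complex.ofReal_mul, abs_mul, mul_pow, hs_abs, hs_sq, one_mul, abs_of_pos hε,
    harctan] at hmain
  have hboundary := norm_mul_sign_mul_two_arctan_sub_pi_mul_I hs_abs (a lam : ℂ) (ρ / ε)
  rw [Complex.norm_real, Real.norm_eq_abs] at hboundary
  calc _ = ‖((∫ τ in (lam - ρ)..(lam + ρ), (a τ : ℂ) / ((τ : ℂ) - lam - s * ε * Complex.I))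
          - (∫ τ in (lam - ρ)..(lam + ρ), ((a τ : ℂ) - a lam) / ((τ : ℂ) - lam))
          - a lam * (2 * (s * arctan (ρ / ε)) * Complex.I))
          + (a lam : ℂ) * (s * (2 * arctan (ρ / ε) - Real.pi) * Complex.I)‖ := by
        congr 1
        ring
    _ ≤ _ := (norm_add_le _ _).trans (add_le_add hmain hboundary.le)
end

section
/- Let λ ∈ ℝ, ρ ∈ (0,∞), and let a : [λ−ρ, λ+ρ] → ℝ be measurable with a(λ) finite such that |a(λ+t) − a(λ)| ≤ ω(|t|) for all 0 < |t| ≤ ρ, where ω : (0,ρ] → [0,∞) and t ↦ ω(t)/t is integrable over (0,ρ). Then for every ε > 0 and each choice of sign, | ∫_{λ−ρ}^{λ+ρ} a(τ)/(τ−λ ∓ iε) dτ | ≤ 2π ( ∫_0^ρ ω(t)/t dt + |a(λ)| ). -/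
/-!
Write `y = sε` and split `a(λ + t) = (a(λ + t) - a(λ)) + a(λ)`. Since `|t - iy| ≥ |t|`, the first
part contributes at most `∫_{-ρ}^{ρ} ω(|t|)/|t| dt = 2 ∫_0^ρ ω(t)/t dt`. For the constant part,
`1/(t - iy) = (t + iy)/(t² + y²)` has odd real part, so `∫_{-ρ}^{ρ} dt/(t - iy) = 2i arctan(ρ/y)`,
whose modulus is below `π`.
-/

open MeasureTheory Set intervalIntegral

section Symmetric

variable {E : Type*} [NormedAddCommGroup E] [NormedSpace ℝ E]

theorem Function.Odd.intervalIntegral_eq_zero {f : ℝ → E} (hf : Function.Odd f) (ρ : ℝ) :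
    ∫ t in -ρ..ρ, f t = 0 := by
  have h := integral_comp_neg f (a := -ρ) (b := ρ)
  simp only [neg_neg, hf _, intervalIntegral.integral_neg] at h
  linear_combination (norm := module) (-(1 / 2 : ℝ)) • h

theorem intervalIntegrable_comp_abs_and_integral_eq_two_smul {h : ℝ → E} {ρ : ℝ} (hρ : 0 ≤ ρ)
    (hh : IntegrableOn h (Ioc 0 ρ)) :
    IntervalIntegrable (fun t => h |t|) volume (-ρ) ρ ∧
      ∫ t in -ρ..ρ, h |t| = (2 : ℝ) • ∫ t in Ioc 0 ρ, h t := by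
  have hpos : EqOn (fun t => h |t|) h (Ioc 0 ρ) := fun t ht => by simp [abs_of_pos ht.1]
  have hright : IntervalIntegrable (fun t => h |t|) volume 0 ρ :=
    (intervalIntegrable_iff_integrableOn_Ioc_of_le hρ).2 (hh.congr_fun hpos.symm measurableSet_Ioc)
  have hleft : IntervalIntegrable (fun t => h |t|) volume (-ρ) 0 := by
    simpa using ((IntervalIntegrable.iff_comp_neg).1 hright).symm
  have hright_eq : ∫ t in 0..ρ, h |t| = ∫ t in Ioc 0 ρ, h t := by
    rw [integral_of_le hρ]; exact setIntegral_congr_fun measurableSet_Ioc hpos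
  have hleft_eq : ∫ t in -ρ..0, h |t| = ∫ t in 0..ρ, h |t| := by
    simpa using (integral_comp_neg (fun t => h |t|) (a := 0) (b := ρ)).symm
  refine ⟨hleft.trans hright, ?_⟩
  rw [← integral_add_adjacent_intervals hleft hright, hleft_eq, hright_eq, two_smul]

end Symmetric

section CauchyKernel

open Complex

theorem abs_le_norm_ofReal_sub_mul_I (t y : ℝ) : |t| ≤ ‖(t : ℂ) - y * I‖ := by
  simpa using abs_re_le_norm ((t : ℂ) - y * I)

theorem inv_ofReal_sub_mul_I (t y : ℝ) :
    ((t : ℂ) - y * I)⁻¹ = ((t / (y ^ 2 + t ^ 2) : ℝ) : ℂ) + ((y / (y ^ 2 + t ^ 2) : ℝ) : ℂ) * I := by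
  simp only [Complex.ext_iff, inv_re, inv_im, add_re, add_im, ofReal_re, ofReal_im, mul_re,
    mul_im, I_re, I_im, sub_re, sub_im, normSq_apply]
  constructor <;> ring

theorem integral_inv_ofReal_sub_mul_I {y : ℝ} (hy : y ≠ 0) (ρ : ℝ) :
    ∫ t in -ρ..ρ, ((t : ℂ) - y * I)⁻¹ = 2 * Real.arctan (ρ / y) * I := by
  have hden : ∀ t : ℝ, y ^ 2 + t ^ 2 ≠ 0 := fun t => by positivity
  have hodd : Function.Odd fun t : ℝ => t / (y ^ 2 + t ^ 2) := fun t => by simp [neg_div]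
  simp_rw [inv_ofReal_sub_mul_I]
  rw [intervalIntegral.integral_add, intervalIntegral.integral_mul_const, integral_ofReal,
    integral_ofReal, hodd.intervalIntegral_eq_zero, integral_div_sq_add_sq, neg_div,
    Real.arctan_neg]
  · push_cast; ring
  all_goals exact (Continuous.intervalIntegrable (by fun_prop (disch := exact hden _)) _ _)

theorem norm_integral_inv_ofReal_sub_mul_I_le {y : ℝ} (hy : y ≠ 0) (ρ : ℝ) :
    ‖∫ t in -ρ..ρ, ((t : ℂ) - y * I)⁻¹‖ ≤ Real.pi := by
  rw [integral_inv_ofReal_sub_mul_I hy, norm_mul, norm_I, mul_one, norm_mul, Complex.norm_two,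
    norm_real, Real.norm_eq_abs]
  have := Real.arctan_mem_Ioo (ρ / y)
  linarith [abs_lt.2 ⟨this.1, this.2⟩]

end CauchyKernel

section ModulusOfContinuity

open Complex

variable {f ω : ℝ → ℝ} {ρ : ℝ}

theorem norm_ofReal_div_ofReal_sub_mul_I_le (x : ℝ) {t : ℝ} (ht : t ≠ 0) (y : ℝ) :
    ‖(x : ℂ) / ((t : ℂ) - y * I)‖ ≤ |x| / |t| := by
  rw [norm_div, norm_real, Real.norm_eq_abs]
  exact div_le_div_of_nonneg_left (abs_nonneg x) (abs_pos.2 ht) (abs_le_norm_ofReal_sub_mul_I t y)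

variable (hbound : ∀ t : ℝ, 0 < |t| → |t| ≤ ρ → |f t| ≤ ω |t|)
include hbound

theorem ae_norm_ofReal_div_ofReal_sub_mul_I_le (y : ℝ) :
    ∀ᵐ t, t ∈ Ioc (-ρ) ρ → ‖(f t : ℂ) / ((t : ℂ) - y * I)‖ ≤ ω |t| / |t| := by
  filter_upwards [Measure.ae_ne volume 0] with t ht0 ht
  have htρ : |t| ≤ ρ := abs_le.2 ⟨ht.1.le, ht.2⟩
  exact (norm_ofReal_div_ofReal_sub_mul_I_le (f t) ht0 y).trans
    (div_le_div_of_nonneg_right (hbound t (abs_pos.2 ht0) htρ) (abs_nonneg t))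

variable (hρ : 0 ≤ ρ) (hωint : IntegrableOn (fun t => ω t / t) (Ioc 0 ρ))
include hρ hωint

theorem intervalIntegrable_ofReal_div_ofReal_sub_mul_I (hf : Measurable f) (y : ℝ) :
    IntervalIntegrable (fun t => (f t : ℂ) / ((t : ℂ) - y * I)) volume (-ρ) ρ := by
  refine (intervalIntegrable_comp_abs_and_integral_eq_two_smul hρ hωint).1.mono_fun'
    (Measurable.aestronglyMeasurable (by fun_prop)) ?_
  rw [uIoc_of_le (by linarith)]
  exact (ae_restrict_iff' measurableSet_Ioc).2 (ae_norm_ofReal_div_ofReal_sub_mul_I_le hbound y)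

theorem norm_integral_ofReal_div_ofReal_sub_mul_I_le (y : ℝ) :
    ‖∫ t in -ρ..ρ, (f t : ℂ) / ((t : ℂ) - y * I)‖ ≤ 2 * ∫ t in Ioc 0 ρ, ω t / t := by
  obtain ⟨hint, heq⟩ := intervalIntegrable_comp_abs_and_integral_eq_two_smul hρ hωint
  have h := norm_integral_le_of_norm_le (by linarith)
    (ae_norm_ofReal_div_ofReal_sub_mul_I_le hbound y) hint
  rwa [heq, smul_eq_mul] at h

end ModulusOfContinuity

/-- Let `λ ∈ ℝ`, `ρ ∈ (0,∞)`, and let `a` be measurable with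
`|a(λ+t) − a(λ)| ≤ ω(|t|)` for all `0 < |t| ≤ ρ`, where `t ↦ ω(t)/t` is integrable over `(0,ρ)`.
Then for every `ε > 0` and each choice of sign `s = ±1`,
`| ∫_{λ−ρ}^{λ+ρ} a(τ)/(τ−λ − s i ε) dτ | ≤ 2π ( ∫_0^ρ ω(t)/t dt + |a(λ)| )`. -/
theorem stmt1 (lam ρ : ℝ) (hρ : 0 < ρ)
    (a : ℝ → ℝ) (ha : Measurable a)
    (ω : ℝ → ℝ) (hω0 : ∀ t ∈ Set.Ioc (0:ℝ) ρ, 0 ≤ ω t)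
    (hωint : IntegrableOn (fun t => ω t / t) (Set.Ioc (0:ℝ) ρ))
    (hbound : ∀ t : ℝ, 0 < |t| → |t| ≤ ρ → |a (lam + t) - a lam| ≤ ω |t|) :
    ∀ ε : ℝ, 0 < ε → ∀ s : ℝ, s = 1 ∨ s = -1 →
      ‖∫ τ in (lam - ρ)..(lam + ρ), (a τ : ℂ) / ((τ : ℂ) - lam - s * ε * Complex.I)‖
        ≤ 2 * Real.pi * ((∫ t in Set.Ioc (0:ℝ) ρ, ω t / t) + |a lam|) := by
  intro ε hε s hs
  have hy : s * ε ≠ 0 := mul_ne_zero (by rcases hs with rfl | rfl <;> norm_num) hε.ne'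
  have hshift : ∫ τ in (lam - ρ)..(lam + ρ), (a τ : ℂ) / ((τ : ℂ) - lam - s * ε * Complex.I) =
      ∫ t in -ρ..ρ, (((a (lam + t) - a lam : ℝ) : ℂ) / ((t : ℂ) - ↑(s * ε) * Complex.I) +
        a lam * ((t : ℂ) - ↑(s * ε) * Complex.I)⁻¹) := by
    rw [sub_eq_add_neg, ← integral_comp_add_left]
    congr 1 with t
    push_cast
    ring
  have hωint_nonneg : 0 ≤ ∫ t in Ioc 0 ρ, ω t / t :=
    setIntegral_nonneg measurableSet_Ioc fun t ht => div_nonneg (hω0 t ht) ht.1.le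
  have hcont : Continuous fun t : ℝ => ((t : ℂ) - ↑(s * ε) * Complex.I)⁻¹ :=
    (by fun_prop : Continuous _).inv₀ fun t h => hy (by simpa using congrArg Complex.im h)
  rw [hshift, intervalIntegral.integral_add
    (intervalIntegrable_ofReal_div_ofReal_sub_mul_I hbound hρ.le hωint (by fun_prop) _)
    (hcont.const_mul _ |>.intervalIntegrable _ _), intervalIntegral.integral_const_mul]
  calc _ ≤ 2 * (∫ t in Ioc 0 ρ, ω t / t) + |a lam| * Real.pi := by
        refine norm_add_le_of_le
          (norm_integral_ofReal_div_ofReal_sub_mul_I_le hbound hρ.le hωint _) ?_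
        rw [norm_mul, Complex.norm_real, Real.norm_eq_abs]
        exact mul_le_mul_of_nonneg_left (norm_integral_inv_ofReal_sub_mul_I_le hy ρ) (abs_nonneg _)
    _ ≤ _ := by nlinarith [Real.two_le_pi, abs_nonneg (a lam)]
end

section
/- Let n ≥ 1, let A ∈ ℝ^{n×n} be symmetric and invertible, let s > n/2 and α ∈ (0,1). Then there is a constant C > 0, depending only on n, A, s, α, such that for every σ ∈ ℝ with |σ| ≥ 1 and every measurable g : ℝⁿ → ℂ with ∫_{ℝⁿ} (1+|ξ|²)^{s+2α} |g(ξ)|² dξ < ∞, one has | ∫_{ℝⁿ} ( e^{−i⟨ξ,A^{−1}ξ⟩/(4σ)} − 1 ) g(ξ) dξ | ≤ C |σ|^{−α} ( ∫_{ℝⁿ} (1+|ξ|²)^{s+2α} |g(ξ)|² dξ )^{1/2}; in particular the integrand on the left is integrable. -/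
/-!
Since `|e^{it} - 1| ≤ min(2, |t|) ≤ 2|t|^α` and `|⟨ξ, A⁻¹ξ⟩| ≤ M(1 + |ξ|²)` with `M = ∑ᵢⱼ |(A⁻¹)ᵢⱼ|`, the
phase factor is at most `2 M^α |σ|^{-α} (1 + |ξ|²)^α`. Writing `(1 + |ξ|²)^α |g| = (1 + |ξ|²)^{-s/2} ·
(1 + |ξ|²)^{(s+2α)/2} |g|`, Cauchy–Schwarz bounds its integral by the weighted norm of `g` times
`(∫ (1 + |ξ|²)^{-s})^{1/2}`, which is finite because `2s > n`.
-/

open MeasureTheory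

/-- The quadratic form `ξ ↦ ⟨ξ, Aξ⟩` on `ℝⁿ`. -/
noncomputable def quadForm {n : ℕ} (A : Matrix (Fin n) (Fin n) ℝ)
    (ξ : EuclideanSpace ℝ (Fin n)) : ℝ :=
  ∑ i, ξ i * ∑ j, A i j * ξ j

@[fun_prop]
lemma continuous_quadForm {n : ℕ} (B : Matrix (Fin n) (Fin n) ℝ) : Continuous (quadForm B) := by
  unfold quadForm; fun_prop

lemma abs_quadForm_le {n : ℕ} (B : Matrix (Fin n) (Fin n) ℝ) (ξ : EuclideanSpace ℝ (Fin n)) :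
    |quadForm B ξ| ≤ (∑ i, ∑ j, |B i j|) * ‖ξ‖ ^ 2 := by
  have hcoord : ∀ i, |ξ i| ≤ ‖ξ‖ := fun i => by simpa using PiLp.norm_apply_le ξ i
  calc |quadForm B ξ| = |∑ i, ∑ j, B i j * (ξ i * ξ j)| := by
        simp only [quadForm, Finset.mul_sum]
        exact congrArg _ (Finset.sum_congr rfl fun i _ => Finset.sum_congr rfl fun j _ => by ring)
  _ ≤ ∑ i, ∑ j, |B i j * (ξ i * ξ j)| :=
        (Finset.abs_sum_le_sum_abs _ _).trans
          (Finset.sum_le_sum fun i _ => Finset.abs_sum_le_sum_abs _ _)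
  _ ≤ ∑ i, ∑ j, |B i j| * ‖ξ‖ ^ 2 := by
        gcongr with i _ j _
        rw [abs_mul, abs_mul, sq]
        gcongr
        exacts [hcoord i, hcoord j]
  _ = (∑ i, ∑ j, |B i j|) * ‖ξ‖ ^ 2 := by simp only [Finset.sum_mul]

lemma norm_exp_I_mul_ofReal_sub_one_le_rpow {α : ℝ} (hα0 : 0 ≤ α) (hα1 : α ≤ 1) (t : ℝ) :
    ‖Complex.exp (Complex.I * t) - 1‖ ≤ 2 * |t| ^ α := by
  have hpow : 0 ≤ |t| ^ α := Real.rpow_nonneg (abs_nonneg t) α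
  rcases le_total |t| 1 with ht | ht
  · calc ‖Complex.exp (Complex.I * t) - 1‖ ≤ |t| := Real.norm_exp_I_mul_ofReal_sub_one_le
    _ ≤ |t| ^ α := Real.self_le_rpow_of_le_one (abs_nonneg t) ht hα1
    _ ≤ 2 * |t| ^ α := by linarith
  · calc ‖Complex.exp (Complex.I * t) - 1‖ ≤ ‖Complex.exp (Complex.I * t)‖ + ‖(1 : ℂ)‖ :=
          norm_sub_le _ _
    _ = 2 := by rw [mul_comm, Complex.norm_exp_ofReal_mul_I]; norm_num
    _ ≤ 2 * |t| ^ α := by linarith [Real.one_le_rpow ht hα0]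

lemma norm_exp_quadForm_sub_one_le {n : ℕ} (B : Matrix (Fin n) (Fin n) ℝ) {α : ℝ}
    (hα0 : 0 ≤ α) (hα1 : α ≤ 1) (σ : ℝ) (ξ : EuclideanSpace ℝ (Fin n)) :
    ‖Complex.exp (-(Complex.I * quadForm B ξ / (4 * σ))) - 1‖
      ≤ 2 * (∑ i, ∑ j, |B i j|) ^ α * |σ| ^ (-α) * (1 + ‖ξ‖ ^ 2) ^ α := by
  set M := ∑ i, ∑ j, |B i j|
  have hM : 0 ≤ M := by positivity
  set t := -(quadForm B ξ / (4 * σ))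
  have ht : |t| ≤ M * (1 + ‖ξ‖ ^ 2) / |σ| := by
    have hq : |quadForm B ξ| ≤ M * (1 + ‖ξ‖ ^ 2) :=
      (abs_quadForm_le B ξ).trans (by gcongr; linarith)
    rw [abs_neg, abs_div, abs_mul, abs_of_pos (four_pos : (0:ℝ) < 4)]
    calc |quadForm B ξ| / (4 * |σ|) ≤ |quadForm B ξ| / |σ| := by
          rcases (abs_nonneg σ).eq_or_lt with h | h
          · simp [← h]
          · gcongr; linarith
    _ ≤ M * (1 + ‖ξ‖ ^ 2) / |σ| := by gcongr
  have harg : -(Complex.I * quadForm B ξ / (4 * σ)) = Complex.I * t := by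
    simp only [t]; push_cast; ring
  rw [harg]
  calc ‖Complex.exp (Complex.I * t) - 1‖ ≤ 2 * |t| ^ α :=
        norm_exp_I_mul_ofReal_sub_one_le_rpow hα0 hα1 t
  _ ≤ 2 * (M * (1 + ‖ξ‖ ^ 2) / |σ|) ^ α := by gcongr
  _ = 2 * M ^ α * |σ| ^ (-α) * (1 + ‖ξ‖ ^ 2) ^ α := by
        rw [Real.div_rpow (by positivity) (abs_nonneg σ), Real.mul_rpow hM (by positivity),
          Real.rpow_neg (abs_nonneg σ)]
        ring

lemma integrable_mul_and_integral_mul_le_of_integrable_sq {X : Type*} [MeasurableSpace X]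
    {μ : Measure X} {u v : X → ℝ} (hu0 : 0 ≤ u) (hv0 : 0 ≤ v) (hu : AEStronglyMeasurable u μ)
    (hv : AEStronglyMeasurable v μ) (hu2 : Integrable (fun x => u x ^ 2) μ)
    (hv2 : Integrable (fun x => v x ^ 2) μ) :
    Integrable (fun x => u x * v x) μ ∧
      ∫ x, u x * v x ∂μ ≤ (∫ x, u x ^ 2 ∂μ) ^ (1 / 2 : ℝ) * (∫ x, v x ^ 2 ∂μ) ^ (1 / 2 : ℝ) := by
  have huL2 : MemLp u 2 μ := (memLp_two_iff_integrable_sq hu).2 hu2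
  have hvL2 : MemLp v 2 μ := (memLp_two_iff_integrable_sq hv).2 hv2
  refine ⟨huL2.integrable_mul hvL2, ?_⟩
  have h := integral_mul_le_Lp_mul_Lq_of_nonneg Real.HolderConjugate.two_two
    (Filter.Eventually.of_forall hu0) (Filter.Eventually.of_forall hv0)
    (by simpa using huL2) (by simpa using hvL2)
  simpa [Real.rpow_two] using h

lemma rpow_div_two_sq {x : ℝ} (hx : 0 ≤ x) (r : ℝ) : (x ^ (r / 2)) ^ 2 = x ^ r := by
  rw [← Real.rpow_natCast, ← Real.rpow_mul hx]; norm_num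

lemma integrable_and_integral_one_add_norm_sq_rpow_mul_le {E : Type*} [NormedAddCommGroup E]
    [InnerProductSpace ℝ E] [FiniteDimensional ℝ E] [MeasurableSpace E] [BorelSpace E]
    {μ : Measure E} [μ.IsAddHaarMeasure] {s α : ℝ} (hs : (Module.finrank ℝ E : ℝ) < 2 * s)
    {f : E → ℝ} (hf0 : 0 ≤ f) (hf : AEStronglyMeasurable f μ)
    (hint : Integrable (fun ξ => (1 + ‖ξ‖ ^ 2) ^ (s + 2 * α) * f ξ ^ 2) μ) :
    Integrable (fun ξ => (1 + ‖ξ‖ ^ 2) ^ α * f ξ) μ ∧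
      ∫ ξ, (1 + ‖ξ‖ ^ 2) ^ α * f ξ ∂μ ≤ (∫ ξ, (1 + ‖ξ‖ ^ 2) ^ (-s) ∂μ) ^ (1 / 2 : ℝ) *
        (∫ ξ, (1 + ‖ξ‖ ^ 2) ^ (s + 2 * α) * f ξ ^ 2 ∂μ) ^ (1 / 2 : ℝ) := by
  set w : E → ℝ := fun ξ => 1 + ‖ξ‖ ^ 2
  have hw : ∀ ξ, 0 < w ξ := fun ξ => by positivity
  have hw_cont : Continuous w := by fun_prop
  have hsplit : ∀ ξ, w ξ ^ α * f ξ = w ξ ^ (-s / 2) * (w ξ ^ ((s + 2 * α) / 2) * f ξ) := by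
    intro ξ
    rw [← mul_assoc, ← Real.rpow_add (hw ξ)]
    congr 2; ring
  have hu2 : (fun ξ => (w ξ ^ (-s / 2)) ^ 2) = fun ξ => w ξ ^ (-s) := by
    ext ξ; rw [rpow_div_two_sq (hw ξ).le]
  have hv2 : (fun ξ => (w ξ ^ ((s + 2 * α) / 2) * f ξ) ^ 2)
      = fun ξ => w ξ ^ (s + 2 * α) * f ξ ^ 2 := by
    ext ξ; rw [mul_pow, rpow_div_two_sq (hw ξ).le]
  have hI : Integrable (fun ξ => w ξ ^ (-s)) μ := by
    have h := integrable_rpow_neg_one_add_norm_sq (μ := μ) (r := 2 * s) hs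
    rwa [show -(2 * s) / 2 = -s by ring] at h
  have h := integrable_mul_and_integral_mul_le_of_integrable_sq (μ := μ)
    (fun ξ => Real.rpow_nonneg (hw ξ).le _)
    (fun ξ => mul_nonneg (Real.rpow_nonneg (hw ξ).le _) (hf0 ξ))
    (hw_cont.rpow_const fun ξ => Or.inl (hw ξ).ne').aestronglyMeasurable
    ((hw_cont.rpow_const fun ξ => Or.inl (hw ξ).ne').aestronglyMeasurable.mul hf)
    (hu2 ▸ hI) (hv2 ▸ hint)
  simpa only [← hsplit, hu2, hv2] using h

theorem stmt7_general (n : ℕ) (A : Matrix (Fin n) (Fin n) ℝ)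
    (s α : ℝ) (hs : (n : ℝ) / 2 < s) (hα : α ∈ Set.Ioo (0:ℝ) 1) :
    ∃ C > 0, ∀ σ : ℝ, 1 ≤ |σ| → ∀ g : EuclideanSpace ℝ (Fin n) → ℂ, Measurable g →
      Integrable (fun ξ : EuclideanSpace ℝ (Fin n) =>
        (1 + ‖ξ‖ ^ 2) ^ (s + 2 * α) * ‖g ξ‖ ^ 2) →
      Integrable (fun ξ : EuclideanSpace ℝ (Fin n) =>
        (Complex.exp (-(Complex.I * quadForm A⁻¹ ξ / (4 * σ))) - 1) * g ξ) ∧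
      ‖∫ ξ, (Complex.exp (-(Complex.I * quadForm A⁻¹ ξ / (4 * σ))) - 1) * g ξ‖
        ≤ C * |σ| ^ (-α) *
          (∫ ξ : EuclideanSpace ℝ (Fin n), (1 + ‖ξ‖ ^ 2) ^ (s + 2 * α) * ‖g ξ‖ ^ 2) ^ ((1:ℝ)/2) := by
  set M := ∑ i, ∑ j, |A⁻¹ i j|
  set I := ∫ ξ : EuclideanSpace ℝ (Fin n), (1 + ‖ξ‖ ^ 2) ^ (-s)
  have hI : 0 ≤ I := integral_nonneg fun ξ => Real.rpow_nonneg (by positivity) _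
  refine ⟨2 * M ^ α * I ^ (1 / 2 : ℝ) + 1, by positivity, fun σ _ g hg hint => ?_⟩
  set J := ∫ ξ : EuclideanSpace ℝ (Fin n), (1 + ‖ξ‖ ^ 2) ^ (s + 2 * α) * ‖g ξ‖ ^ 2
  obtain ⟨hφ, hφ_le⟩ :=
    integrable_and_integral_one_add_norm_sq_rpow_mul_le (μ := volume) (α := α)
      (by rw [finrank_euclideanSpace_fin]; linarith) (fun ξ => norm_nonneg (g ξ))
      hg.norm.aestronglyMeasurable hint
  have hbound : ∀ ξ, ‖(Complex.exp (-(Complex.I * quadForm A⁻¹ ξ / (4 * σ))) - 1) * g ξ‖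
      ≤ 2 * M ^ α * |σ| ^ (-α) * ((1 + ‖ξ‖ ^ 2) ^ α * ‖g ξ‖) := fun ξ => by
    rw [norm_mul, ← mul_assoc]
    gcongr
    exact norm_exp_quadForm_sub_one_le A⁻¹ hα.1.le hα.2.le σ ξ
  have hphase : Continuous fun ξ : EuclideanSpace ℝ (Fin n) =>
      Complex.exp (-(Complex.I * quadForm A⁻¹ ξ / (4 * σ))) - 1 := by fun_prop
  have hF : Integrable (fun ξ : EuclideanSpace ℝ (Fin n) =>
      (Complex.exp (-(Complex.I * quadForm A⁻¹ ξ / (4 * σ))) - 1) * g ξ) :=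
    (hφ.const_mul _).mono' (hphase.aestronglyMeasurable.mul hg.aestronglyMeasurable)
      (ae_of_all _ hbound)
  refine ⟨hF, ?_⟩
  calc _ ≤ ∫ ξ, 2 * M ^ α * |σ| ^ (-α) * ((1 + ‖ξ‖ ^ 2) ^ α * ‖g ξ‖) :=
        norm_integral_le_of_norm_le (hφ.const_mul _) (ae_of_all _ hbound)
  _ = 2 * M ^ α * |σ| ^ (-α) * ∫ ξ, (1 + ‖ξ‖ ^ 2) ^ α * ‖g ξ‖ := integral_const_mul _ _
  _ ≤ 2 * M ^ α * |σ| ^ (-α) * (I ^ (1 / 2 : ℝ) * J ^ (1 / 2 : ℝ)) := by gcongr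
  _ = 2 * M ^ α * I ^ (1 / 2 : ℝ) * |σ| ^ (-α) * J ^ (1 / 2 : ℝ) := by ring
  _ ≤ _ := by gcongr; linarith

/-- Let `A ∈ ℝ^{n×n}` be symmetric and invertible, `s > n/2`, `α ∈ (0,1)`. Then there is
`C > 0`, depending only on `n, A, s, α`, such that for every `|σ| ≥ 1` and every measurable
`g : ℝⁿ → ℂ` with finite weighted norm,
`| ∫ (e^{−i⟨ξ,A⁻¹ξ⟩/(4σ)} − 1) g(ξ) dξ | ≤ C |σ|^{−α} (∫ (1+|ξ|²)^{s+2α} |g(ξ)|² dξ)^{1/2}`;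
in particular the integrand on the left is integrable. -/
theorem stmt7 (n : ℕ) (hn : 1 ≤ n) (A : Matrix (Fin n) (Fin n) ℝ) (hA : A.IsSymm)
    (hdet : IsUnit A.det) (s α : ℝ) (hs : (n : ℝ) / 2 < s) (hα : α ∈ Set.Ioo (0:ℝ) 1) :
    ∃ C > 0, ∀ σ : ℝ, 1 ≤ |σ| → ∀ g : EuclideanSpace ℝ (Fin n) → ℂ, Measurable g →
      Integrable (fun ξ : EuclideanSpace ℝ (Fin n) =>
        (1 + ‖ξ‖ ^ 2) ^ (s + 2 * α) * ‖g ξ‖ ^ 2) →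
      Integrable (fun ξ : EuclideanSpace ℝ (Fin n) =>
        (Complex.exp (-(Complex.I * quadForm A⁻¹ ξ / (4 * σ))) - 1) * g ξ) ∧
      ‖∫ ξ, (Complex.exp (-(Complex.I * quadForm A⁻¹ ξ / (4 * σ))) - 1) * g ξ‖
        ≤ C * |σ| ^ (-α) *
          (∫ ξ : EuclideanSpace ℝ (Fin n), (1 + ‖ξ‖ ^ 2) ^ (s + 2 * α) * ‖g ξ‖ ^ 2) ^ ((1:ℝ)/2) :=
  stmt7_general n A s α hs hα
end

section
/- Let d ≥ 1, let R > 0, and let K : ℝ^d × ℝ^d → ℂ be bounded and measurable with K(x+n, y) = K(x, y−n) for all x, y ∈ ℝ^d and n ∈ ℤ^d, and with K(x,y) = 0 whenever |x−y| > R. Let f : ℝ^d → ℂ be continuous with compact support. Then for all x ∈ ℝ^d and l ∈ ℝ^d, Σ_{m∈ℤ^d} e^{i⟨m,l⟩} ∫_{ℝ^d} K(x−m, y) f(y) dy = ∫_{(0,1)^d} ( Σ_{m∈ℤ^d} e^{i⟨m,l⟩} K(x−m, y) ) ( Σ_{n∈ℤ^d} e^{i⟨n,l⟩} f(y−n) )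 dy, where all sums have only finitely many nonzero terms. -/
/-!
Unfolding the integral over `ℝ^d` into integrals over the lattice translates `n + (0,1)^d`
of the cell turns the left-hand side into `Σ_m Σ_n e^{i⟨m,l⟩} ∫_cell K(x-m, y+n) f(y+n) dy`.
Periodicity of `K` rewrites `K(x-m, y+n)` as `K(x-(m+n), y)`, and after the change of indices
`(m, n) ↦ (m+n, -n)` the phase splits as `e^{i⟨m+n,l⟩} e^{i⟨-n,l⟩}`, so the double sum is the
product of the two Floquet–Bloch sums integrated over the cell. Since `K` has finite range and
`f` compact support, only finitely many terms are nonzero on the bounded cell, which makes all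
exchanges of sums and integrals finite.
-/

open MeasureTheory

/-- The point of `ℝ^d` with integer coordinates `n ∈ ℤ^d`. -/
noncomputable def zv {d : ℕ} (n : Fin d → ℤ) : EuclideanSpace ℝ (Fin d) :=
  (WithLp.equiv 2 (Fin d → ℝ)).symm fun i => (n i : ℝ)

/-- The periodicity cell `(0,1)^d` as a subset of `ℝ^d`. -/
def cellE (d : ℕ) : Set (EuclideanSpace ℝ (Fin d)) :=
  {y | ∀ i, y i ∈ Set.Ioo (0:ℝ) 1}

open Bornology Function Submodule
open scoped Pointwise

section Summation

variable {ι κ M : Type*}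

theorem tsum_prod_of_hasFiniteSupport [AddCommMonoid M] [TopologicalSpace M] [ContinuousAdd M]
    [T3Space M] {F : ι × κ → M} (hF : F.HasFiniteSupport) :
    ∑' p, F p = ∑' (i) (k), F (i, k) :=
  (summable_of_hasFiniteSupport hF).tsum_prod' fun i =>
    summable_of_hasFiniteSupport <| hF.preimage (Prod.mk_right_injective i).injOn

theorem tsum_mul_tsum_of_hasFiniteSupport [NormedRing M] [CompleteSpace M]
    {f : ι → M} {g : κ → M} (hf : f.HasFiniteSupport) (hg : g.HasFiniteSupport) :
    (∑' i, f i) * ∑' k, g k = ∑' p : ι × κ, f p.1 * g p.2 :=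
  tsum_mul_tsum_of_summable_norm
    (summable_of_hasFiniteSupport <| by simpa [HasFiniteSupport, Function.support] using hf)
    (summable_of_hasFiniteSupport <| by simpa [HasFiniteSupport, Function.support] using hg)

theorem setIntegral_tsum_of_finite {α E : Type*} [MeasurableSpace α] [NormedAddCommGroup E]
    [NormedSpace ℝ E] {μ : Measure α} {s : Set α} (hs : MeasurableSet s) {F : ι → α → E}
    {t : Set ι} (ht : t.Finite) (hFt : ∀ i ∉ t, ∀ y ∈ s, F i y = 0)
    (hF : ∀ i, IntegrableOn (F i) s μ) :
    ∫ y in s, ∑' i, F i y ∂μ = ∑' i, ∫ y in s, F i y ∂μ := by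
  lift t to Finset ι using ht
  rw [tsum_eq_sum fun i hi => setIntegral_eq_zero_of_forall_eq_zero (hFt i hi),
    ← integral_finsetSum t fun i _ => hF i]
  exact setIntegral_congr_fun hs fun y hy => tsum_eq_sum fun i hi => hFt i hi y hy

end Summation

section Lattice

variable {d : ℕ}

theorem zv_add (m n : Fin d → ℤ) : zv (m + n) = zv m + zv n := by
  ext i; simp [zv]

theorem zv_neg (n : Fin d → ℤ) : zv (-n) = -zv n := by
  ext i; simp [zv]

theorem zv_injective : Injective (zv : (Fin d → ℤ) → EuclideanSpace ℝ (Fin d)) := by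
  intro m n h
  ext i
  simpa [zv] using congrArg (· i) h

variable (d) in
noncomputable def zvEquiv :
    (Fin d → ℤ) ≃ (span ℤ (Set.range (EuclideanSpace.basisFun (Fin d) ℝ).toBasis)).toAddSubgroup :=
  ((EuclideanSpace.basisFun (Fin d) ℝ).toBasis.restrictScalars ℤ).equivFun.toEquiv.symm

theorem coe_zvEquiv (n : Fin d → ℤ) : (zvEquiv d n : EuclideanSpace ℝ (Fin d)) = zv n := by
  simp only [zvEquiv, LinearEquiv.coe_toEquiv_symm, EquivLike.coe_coe]
  rw [Module.Basis.equivFun_symm_apply]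
  ext i
  push_cast
  simp_rw [Module.Basis.restrictScalars_apply (R := ℤ) (EuclideanSpace.basisFun (Fin d) ℝ).toBasis]
  simp [zv, Pi.single_apply]

theorem finite_setOf_zv_mem {s : Set (EuclideanSpace ℝ (Fin d))} (hs : IsBounded s) :
    {n : Fin d → ℤ | zv n ∈ s}.Finite := by
  have h := (ZSpan.setFinite_inter (EuclideanSpace.basisFun (Fin d) ℝ).toBasis hs).preimage
    zv_injective.injOn
  refine h.subset fun n hn => ⟨hn, ?_⟩
  rw [← coe_zvEquiv]
  exact (zvEquiv d n).2

theorem isOpen_cellE : IsOpen (cellE d) := by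
  have : cellE d = ⋂ i, (fun y : EuclideanSpace ℝ (Fin d) => y i) ⁻¹' Set.Ioo 0 1 := by
    ext y; simp [cellE]
  rw [this]
  exact isOpen_iInter_of_finite fun i => isOpen_Ioo.preimage (by fun_prop)

theorem cellE_subset_fundamentalDomain :
    cellE d ⊆ ZSpan.fundamentalDomain (EuclideanSpace.basisFun (Fin d) ℝ).toBasis :=
  fun _ hy i => Set.Ioo_subset_Ico_self (hy i)

theorem isBounded_cellE : IsBounded (cellE d) :=
  (ZSpan.fundamentalDomain_isBounded _).subset cellE_subset_fundamentalDomain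

theorem cellE_ae_eq_fundamentalDomain :
    cellE d =ᵐ[volume] ZSpan.fundamentalDomain (EuclideanSpace.basisFun (Fin d) ℝ).toBasis := by
  have h := (EuclideanSpace.volume_preserving_symm_measurableEquiv_toLp (Fin d))
    |>.quasiMeasurePreserving.preimage_ae_eq <|
    (Measure.pi_Ioo_ae_eq_pi_Icc (μ := fun _ : Fin d => (volume : Measure ℝ)) (s := Set.univ)
      (f := fun _ => 0) (g := fun _ => 1)).trans Measure.pi_Ico_ae_eq_pi_Icc.symm
  have hcell : cellE d =
      (MeasurableEquiv.toLp 2 (Fin d → ℝ)).symm ⁻¹' Set.univ.pi fun _ => Set.Ioo 0 1 := by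
    ext y; simp [cellE]
  have hdomain : ZSpan.fundamentalDomain (EuclideanSpace.basisFun (Fin d) ℝ).toBasis =
      (MeasurableEquiv.toLp 2 (Fin d → ℝ)).symm ⁻¹' Set.univ.pi fun _ => Set.Ico 0 1 := by
    ext y; simp [ZSpan.fundamentalDomain]
  rwa [hcell, hdomain]

theorem integral_eq_tsum_setIntegral_cellE {E : Type*} [NormedAddCommGroup E] [NormedSpace ℝ E]
    {g : EuclideanSpace ℝ (Fin d) → E} (hg : Integrable g) :
    ∫ y, g y = ∑' n : Fin d → ℤ, ∫ y in cellE d, g (zv n + y) := by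
  have : Countable (span ℤ (Set.range (EuclideanSpace.basisFun (Fin d) ℝ).toBasis)).toAddSubgroup :=
    Countable.of_equiv _ (zvEquiv d)
  have hdomain := ZSpan.isAddFundamentalDomain' (EuclideanSpace.basisFun (Fin d) ℝ).toBasis volume
  rw [hdomain.integral_eq_tsum'' g hg, ← (zvEquiv d).tsum_eq]
  refine tsum_congr fun n => ?_
  rw [setIntegral_congr_set cellE_ae_eq_fundamentalDomain.symm]
  exact setIntegral_congr_fun isOpen_cellE.measurableSet fun y _ => by
    rw [← coe_zvEquiv]
    rfl

end Lattice

section Support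

variable {d : ℕ}

theorem finite_setOf_exists_apply_sub_zv_ne_zero {M : Type*} [Zero M]
    {g : EuclideanSpace ℝ (Fin d) → M} (hg : IsBounded (support g))
    {B : Set (EuclideanSpace ℝ (Fin d))} (hB : IsBounded B) :
    {n : Fin d → ℤ | ∃ y ∈ B, g (y - zv n) ≠ 0}.Finite :=
  (finite_setOf_zv_mem (isBounded_sub hB hg)).subset fun n ⟨y, hy, hgy⟩ =>
    ⟨y, hy, y - zv n, hgy, sub_sub_cancel y (zv n)⟩

theorem finite_setOf_exists_apply_sub_zv_apply_ne_zero {M : Type*} [Zero M]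
    {K : EuclideanSpace ℝ (Fin d) → EuclideanSpace ℝ (Fin d) → M} {R : ℝ}
    (hK : ∀ x y, R < ‖x - y‖ → K x y = 0) (x : EuclideanSpace ℝ (Fin d))
    {B : Set (EuclideanSpace ℝ (Fin d))} (hB : IsBounded B) :
    {m : Fin d → ℤ | ∃ y ∈ B, K (x - zv m) y ≠ 0}.Finite := by
  have hbdd : IsBounded ({x} - B - Metric.closedBall 0 R) :=
    isBounded_sub (isBounded_sub isBounded_singleton hB) Metric.isBounded_closedBall
  refine (finite_setOf_zv_mem hbdd).subset fun m ⟨y, hy, hKy⟩ => ?_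
  have hdist : ‖x - zv m - y‖ ≤ R := not_lt.1 (mt (hK _ _) hKy)
  refine ⟨x - y, Set.sub_mem_sub rfl hy, x - y - zv m, ?_, sub_sub_cancel _ _⟩
  rwa [mem_closedBall_zero_iff, sub_right_comm]

end Support

section Bloch

variable {d : ℕ}

theorem apply_add_zv_of_periodic {M : Type*}
    {K : EuclideanSpace ℝ (Fin d) → EuclideanSpace ℝ (Fin d) → M}
    (hK : ∀ x y n, K (x + zv n) y = K x (y - zv n)) (x y : EuclideanSpace ℝ (Fin d))
    (n : Fin d → ℤ) : K x (zv n + y) = K (x - zv n) y := by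
  simpa using hK (x - zv n) (zv n + y) n

noncomputable def blochPhase (l : EuclideanSpace ℝ (Fin d)) (m : Fin d → ℤ) : ℂ :=
  Complex.exp (Complex.I * ((∑ i, (m i : ℝ) * l i : ℝ) : ℂ))

theorem blochPhase_add (l : EuclideanSpace ℝ (Fin d)) (m n : Fin d → ℤ) :
    blochPhase l (m + n) = blochPhase l m * blochPhase l n := by
  simp only [blochPhase, ← Complex.exp_add, Pi.add_apply, Int.cast_add, add_mul,
    Finset.sum_add_distrib]
  push_cast
  ring_nf

theorem norm_blochPhase (l : EuclideanSpace ℝ (Fin d)) (m : Fin d → ℤ) :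
    ‖blochPhase l m‖ = 1 := by
  simp [blochPhase, Complex.norm_exp]

theorem blochPhase_add_mul_neg (l : EuclideanSpace ℝ (Fin d)) (m n : Fin d → ℤ) :
    blochPhase l (m + n) * blochPhase l (-n) = blochPhase l m := by
  rw [← blochPhase_add, add_neg_cancel_right]

theorem tsum_blochPhase_mul_integral_eq_setIntegral_cellE
    {K : EuclideanSpace ℝ (Fin d) → EuclideanSpace ℝ (Fin d) → ℂ}
    {f : EuclideanSpace ℝ (Fin d) → ℂ} (hKper : ∀ x y n, K (x + zv n) y = K x (y - zv n))
    (hKm : ∀ x, AEStronglyMeasurable (K x)) {M : ℝ} (hKb : ∀ x y, ‖K x y‖ ≤ M)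
    (hf : Integrable f) (x l : EuclideanSpace ℝ (Fin d))
    (hKfin : {m | ∃ y ∈ cellE d, K (x - zv m) y ≠ 0}.Finite)
    (hffin : {n | ∃ y ∈ cellE d, f (y - zv n) ≠ 0}.Finite) :
    ∑' m, blochPhase l m * ∫ y, K (x - zv m) y * f y =
      ∫ y in cellE d, (∑' m, blochPhase l m * K (x - zv m) y) *
        ∑' n, blochPhase l n * f (y - zv n) := by
  let a (m : Fin d → ℤ) (y : EuclideanSpace ℝ (Fin d)) : ℂ := blochPhase l m * K (x - zv m) y
  let b (n : Fin d → ℤ) (y : EuclideanSpace ℝ (Fin d)) : ℂ := blochPhase l n * f (y - zv n)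
  let Φ (p : (Fin d → ℤ) × (Fin d → ℤ)) : ℂ := ∫ y in cellE d, a p.1 y * b p.2 y
  have hcell := isOpen_cellE (d := d) |>.measurableSet
  have hab_int (p : (Fin d → ℤ) × (Fin d → ℤ)) :
      IntegrableOn (fun y => a p.1 y * b p.2 y) (cellE d) :=
    (((hf.comp_sub_right (zv p.2)).const_mul (blochPhase l p.2)).bdd_mul (c := M)
      ((hKm _).const_mul _) (ae_of_all _ fun y => by simp [norm_blochPhase, hKb])).integrableOn
  have hab_zero : ∀ p ∉ {m | ∃ y ∈ cellE d, K (x - zv m) y ≠ 0} ×ˢ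
      {n | ∃ y ∈ cellE d, f (y - zv n) ≠ 0}, ∀ y ∈ cellE d, a p.1 y * b p.2 y = 0 := by
    intro p hp y hy
    by_contra hne
    exact hp ⟨⟨y, hy, right_ne_zero_of_mul (left_ne_zero_of_mul hne)⟩,
      ⟨y, hy, right_ne_zero_of_mul (right_ne_zero_of_mul hne)⟩⟩
  have hΦ : Φ.HasFiniteSupport := (hKfin.prod hffin).subset fun p hp => by
    by_contra hpt
    exact hp (setIntegral_eq_zero_of_forall_eq_zero (hab_zero p hpt))
  let σ : Equiv.Perm ((Fin d → ℤ) × (Fin d → ℤ)) :=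
    Involutive.toPerm (fun p => (p.1 + p.2, -p.2)) fun p => by simp
  have hunfold (m : Fin d → ℤ) :
      blochPhase l m * ∫ y, K (x - zv m) y * f y = ∑' n, Φ (m + n, -n) := by
    rw [integral_eq_tsum_setIntegral_cellE ((hf.bdd_mul (hKm _) (ae_of_all _ (hKb _)))),
      ← tsum_mul_left]
    refine tsum_congr fun n => ?_
    rw [← integral_const_mul]
    refine setIntegral_congr_fun hcell fun y _ => ?_
    simp only [a, b, apply_add_zv_of_periodic hKper, zv_add, zv_neg, sub_neg_eq_add, sub_sub,
      add_comm y, ← blochPhase_add_mul_neg l m n]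
    ring
  calc ∑' m, blochPhase l m * ∫ y, K (x - zv m) y * f y
      = ∑' m, ∑' n, Φ (σ (m, n)) := tsum_congr hunfold
    _ = ∑' p, Φ (σ p) := (tsum_prod_of_hasFiniteSupport (hΦ.preimage σ.injective.injOn)).symm
    _ = ∑' p, Φ p := σ.tsum_eq Φ
    _ = ∫ y in cellE d, ∑' p : (Fin d → ℤ) × (Fin d → ℤ), a p.1 y * b p.2 y :=
      (setIntegral_tsum_of_finite hcell (hKfin.prod hffin) hab_zero hab_int).symm
    _ = _ := setIntegral_congr_fun hcell fun y hy => (tsum_mul_tsum_of_hasFiniteSupport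
      (hKfin.subset fun m hm => ⟨y, hy, right_ne_zero_of_mul hm⟩)
      (hffin.subset fun n hn => ⟨y, hy, right_ne_zero_of_mul hn⟩)).symm

end Bloch

theorem stmt17_general (d : ℕ) (R : ℝ)
    (K : EuclideanSpace ℝ (Fin d) → EuclideanSpace ℝ (Fin d) → ℂ)
    (hKm : Measurable (Function.uncurry K)) (M : ℝ) (hKb : ∀ x y, ‖K x y‖ ≤ M)
    (hKper : ∀ (x y : EuclideanSpace ℝ (Fin d)) (n : Fin d → ℤ), K (x + zv n) y = K x (y - zv n))
    (hKsupp : ∀ x y : EuclideanSpace ℝ (Fin d), R < ‖x - y‖ → K x y = 0)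
    (f : EuclideanSpace ℝ (Fin d) → ℂ) (hf : Continuous f) (hfc : HasCompactSupport f) :
    ∀ x l : EuclideanSpace ℝ (Fin d),
      {m : Fin d → ℤ |
        Complex.exp (Complex.I * ((∑ i, (m i : ℝ) * l i : ℝ) : ℂ)) * ∫ y, K (x - zv m) y * f y
          ≠ 0}.Finite ∧
      (∀ y : EuclideanSpace ℝ (Fin d),
        {m : Fin d → ℤ |
          Complex.exp (Complex.I * ((∑ i, (m i : ℝ) * l i : ℝ) : ℂ)) * K (x - zv m) y ≠ 0}.Finite ∧
        {n : Fin d → ℤ |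
          Complex.exp (Complex.I * ((∑ i, (n i : ℝ) * l i : ℝ) : ℂ)) * f (y - zv n) ≠ 0}.Finite) ∧
      (∑' m : Fin d → ℤ,
          Complex.exp (Complex.I * ((∑ i, (m i : ℝ) * l i : ℝ) : ℂ)) * ∫ y, K (x - zv m) y * f y)
        = ∫ y in cellE d,
            (∑' m : Fin d → ℤ,
              Complex.exp (Complex.I * ((∑ i, (m i : ℝ) * l i : ℝ) : ℂ)) * K (x - zv m) y)
            * (∑' n : Fin d → ℤ,
              Complex.exp (Complex.I * ((∑ i, (n i : ℝ) * l i : ℝ) : ℂ)) * f (y - zv n)) := by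
  intro x l
  have hfB : IsBounded (support f) := hfc.isCompact.isBounded.subset (subset_tsupport f)
  have hKx (x' : EuclideanSpace ℝ (Fin d)) : AEStronglyMeasurable (K x') :=
    (hKm.comp measurable_prodMk_left).aestronglyMeasurable
  refine ⟨?_, fun y => ⟨?_, ?_⟩, ?_⟩
  · refine (finite_setOf_exists_apply_sub_zv_apply_ne_zero hKsupp x hfB).subset fun m hm => ?_
    obtain ⟨y, hy⟩ := exists_ne_zero_of_integral_ne_zero (right_ne_zero_of_mul hm)
    exact ⟨y, right_ne_zero_of_mul hy, left_ne_zero_of_mul hy⟩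
  · exact (finite_setOf_exists_apply_sub_zv_apply_ne_zero hKsupp x isBounded_singleton).subset
      fun m hm => ⟨y, rfl, right_ne_zero_of_mul hm⟩
  · exact (finite_setOf_exists_apply_sub_zv_ne_zero hfB isBounded_singleton).subset
      fun n hn => ⟨y, rfl, right_ne_zero_of_mul hn⟩
  · exact tsum_blochPhase_mul_integral_eq_setIntegral_cellE hKper hKx hKb
      (hf.integrable_of_hasCompactSupport hfc) x l
      (finite_setOf_exists_apply_sub_zv_apply_ne_zero hKsupp x isBounded_cellE)
      (finite_setOf_exists_apply_sub_zv_ne_zero hfB isBounded_cellE)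

/-- **Convolution formula for the Floquet–Bloch transform of a kernel operator.**
Let `K : ℝ^d × ℝ^d → ℂ` be bounded and measurable with `K(x+n,y) = K(x,y−n)` for all
`n ∈ ℤ^d` and `K(x,y) = 0` whenever `|x−y| > R`, and let `f` be continuous with compact
support. Then for all `x, l ∈ ℝ^d`,
`Σ_m e^{i⟨m,l⟩} ∫ K(x−m,y) f(y) dy
  = ∫_{(0,1)^d} (Σ_m e^{i⟨m,l⟩} K(x−m,y)) (Σ_n e^{i⟨n,l⟩} f(y−n)) dy`,
where all sums have only finitely many nonzero terms. -/
theorem stmt17 (d : ℕ) (hd : 1 ≤ d) (R : ℝ) (hR : 0 < R)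
    (K : EuclideanSpace ℝ (Fin d) → EuclideanSpace ℝ (Fin d) → ℂ)
    (hKm : Measurable (Function.uncurry K)) (M : ℝ) (hKb : ∀ x y, ‖K x y‖ ≤ M)
    (hKper : ∀ (x y : EuclideanSpace ℝ (Fin d)) (n : Fin d → ℤ), K (x + zv n) y = K x (y - zv n))
    (hKsupp : ∀ x y : EuclideanSpace ℝ (Fin d), R < ‖x - y‖ → K x y = 0)
    (f : EuclideanSpace ℝ (Fin d) → ℂ) (hf : Continuous f) (hfc : HasCompactSupport f) :
    ∀ x l : EuclideanSpace ℝ (Fin d),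
      {m : Fin d → ℤ |
        Complex.exp (Complex.I * ((∑ i, (m i : ℝ) * l i : ℝ) : ℂ)) * ∫ y, K (x - zv m) y * f y
          ≠ 0}.Finite ∧
      (∀ y : EuclideanSpace ℝ (Fin d),
        {m : Fin d → ℤ |
          Complex.exp (Complex.I * ((∑ i, (m i : ℝ) * l i : ℝ) : ℂ)) * K (x - zv m) y ≠ 0}.Finite ∧
        {n : Fin d → ℤ |
          Complex.exp (Complex.I * ((∑ i, (n i : ℝ) * l i : ℝ) : ℂ)) * f (y - zv n) ≠ 0}.Finite) ∧
      (∑' m : Fin d → ℤ,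
          Complex.exp (Complex.I * ((∑ i, (m i : ℝ) * l i : ℝ) : ℂ)) * ∫ y, K (x - zv m) y * f y)
        = ∫ y in cellE d,
            (∑' m : Fin d → ℤ,
              Complex.exp (Complex.I * ((∑ i, (m i : ℝ) * l i : ℝ) : ℂ)) * K (x - zv m) y)
            * (∑' n : Fin d → ℤ,
              Complex.exp (Complex.I * ((∑ i, (n i : ℝ) * l i : ℝ) : ℂ)) * f (y - zv n)) :=
  stmt17_general d R K hKm M hKb hKper hKsupp f hf hfc
end

section
/- Let k ∈ ℝ with e^{2ik} ≠ 1, let f : [0,1] → ℂ be continuous, and let σ ∈ ℂ. Then there exists exactly one pair (ζ, E) with ζ : [0,1] → ℂ twice continuously differentiable and E ∈ ℂ such that ζ(0) = ζ(1), ζ'(0) = ζ'(1), −ζ''(x) − 2ik ζ'(x) − E = f(x) for all x ∈ [0,1], and 2 ∫_0^1 ζ(y) dy = σ. Moreover, necessarily E = −∫_0^1 f(x) dx. -/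
/-!
Integrating the equation over `[0,1]` kills `ζ''` and `ζ'` by periodicity, which forces
`E = -∫ f`. What remains is a first-order equation for `v = ζ'`, namely `v' = -c v - (f + E)`
with `c = 2ik`, whose periodic solution exists and is unique because `exp c ≠ 1`. That solution
has mean zero, so `ζ = b + ∫₀ˣ v` is periodic, and the condition `2 ∫ ζ = σ` fixes `b`.
-/

open MeasureTheory Set

theorem constant_of_hasDerivWithinAt_zero {E : Type*} [NormedAddCommGroup E] [NormedSpace ℝ E]
    {f : ℝ → E} {a b : ℝ} (hf : ∀ x ∈ Icc a b, HasDerivWithinAt f 0 (Icc a b) x) :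
    ∀ x ∈ Icc a b, f x = f a :=
  constant_of_has_deriv_right_zero (fun x hx => (hf x hx).continuousWithinAt) fun x hx =>
    (hf x (Ico_subset_Icc_self hx)).mono_of_mem_nhdsWithin
      (Filter.mem_of_superset (Icc_mem_nhdsGE hx.2) (Icc_subset_Icc_left hx.1))

theorem contDiff_two_of_hasDerivAt {𝕜 F : Type*} [NontriviallyNormedField 𝕜]
    [NormedAddCommGroup F] [NormedSpace 𝕜 F] {f f' f'' : 𝕜 → F}
    (hf : ∀ x, HasDerivAt f (f' x) x) (hf' : ∀ x, HasDerivAt f' (f'' x) x)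
    (hf'' : Continuous f'') : ContDiff 𝕜 2 f := by
  have hderiv : deriv f = f' := funext fun x => (hf x).deriv
  have hderiv' : deriv f' = f'' := funext fun x => (hf' x).deriv
  rw [show (2 : WithTop ℕ∞) = 1 + 1 from rfl, contDiff_succ_iff_deriv, hderiv,
    contDiff_one_iff_deriv, hderiv']
  exact ⟨fun x => (hf x).differentiableAt, by simp, fun x => (hf' x).differentiableAt, hf''⟩

theorem hasDerivAt_cexp_mul_ofReal (c : ℂ) (x : ℝ) :
    HasDerivAt (fun t : ℝ => Complex.exp (c * t)) (c * Complex.exp (c * x)) x := by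
  simpa [mul_comm] using (((hasDerivAt_id x).ofReal_comp).const_mul c).cexp

/-- Multiplying by the integrating factor `exp (c x)` makes `v` constant; periodicity then forces
that constant to vanish unless `exp c = 1`. -/
theorem eqOn_zero_of_hasDerivWithinAt_neg_mul {c : ℂ} (hc : Complex.exp c ≠ 1) {v : ℝ → ℂ}
    (hv : ∀ x ∈ Icc (0:ℝ) 1, HasDerivWithinAt v (-c * v x) (Icc 0 1) x) (hper : v 0 = v 1) :
    EqOn v 0 (Icc 0 1) := by
  have hconst := constant_of_hasDerivWithinAt_zero (f := fun x : ℝ => Complex.exp (c * x) * v x)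
    fun x hx => by
      refine ((hasDerivAt_cexp_mul_ofReal c x).hasDerivWithinAt.fun_mul (hv x hx)).congr_deriv ?_
      ring
  have hv0 : v 0 = 0 := by
    have h1 := hconst 1 (right_mem_Icc.2 zero_le_one)
    simp only [Complex.ofReal_one, mul_one, Complex.ofReal_zero, mul_zero, Complex.exp_zero,
      one_mul, ← hper] at h1
    have h2 : (Complex.exp c - 1) * v 0 = 0 := by linear_combination h1
    exact (mul_eq_zero.1 h2).resolve_left (sub_ne_zero.2 hc)
  intro x hx
  have h1 := hconst x hx
  simp only [Complex.ofReal_zero, mul_zero, Complex.exp_zero, hv0] at h1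
  exact (mul_eq_zero.1 h1).resolve_left (Complex.exp_ne_zero _)

/-- Variation of constants: `u x = exp (-c x) (a + ∫₀ˣ exp (c t) h t dt)`, with `a` the unique
initial value making `u 1 = u 0`, which exists because `exp c ≠ 1`. -/
theorem exists_periodic_hasDerivAt_neg_mul_add {c : ℂ} (hc : Complex.exp c ≠ 1) {h : ℝ → ℂ}
    (hh : Continuous h) : ∃ u : ℝ → ℂ, (∀ x, HasDerivAt u (-c * u x + h x) x) ∧ u 0 = u 1 := by
  set G : ℝ → ℂ := fun x => ∫ t in (0:ℝ)..x, Complex.exp (c * t) * h t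
  have hG : ∀ x : ℝ, HasDerivAt G (Complex.exp (c * x) * h x) x := fun x =>
    ((by fun_prop : Continuous fun t : ℝ => Complex.exp (c * t) * h t).integral_hasStrictDerivAt
      0 x).hasDerivAt
  set a := G 1 / (Complex.exp c - 1)
  refine ⟨fun x => Complex.exp (-c * x) * (a + G x), fun x => ?_, ?_⟩
  · refine ((hasDerivAt_cexp_mul_ofReal (-c) x).fun_mul ((hG x).const_add a)).congr_deriv ?_
    have hinv : Complex.exp (-c * x) * Complex.exp (c * x) = 1 := by
      rw [← Complex.exp_add]; simp
    linear_combination h x * hinv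
  · have hG0 : G 0 = 0 := intervalIntegral.integral_same
    have hne : Complex.exp c - 1 ≠ 0 := sub_ne_zero.2 hc
    simp only [Complex.ofReal_zero, mul_zero, Complex.exp_zero, hG0, add_zero, one_mul,
      Complex.ofReal_one, mul_one, Complex.exp_neg, a]
    field_simp
    ring

structure IsPeriodicSolution (c : ℂ) (f ζ : ℝ → ℂ) (E : ℂ) : Prop where
  contDiffOn : ContDiffOn ℝ 2 ζ (Icc 0 1)
  periodic : ζ 0 = ζ 1
  derivWithin_periodic : derivWithin ζ (Icc 0 1) 0 = derivWithin ζ (Icc 0 1) 1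
  ode : ∀ x ∈ Icc (0:ℝ) 1,
    -derivWithin (derivWithin ζ (Icc 0 1)) (Icc 0 1) x - c * derivWithin ζ (Icc 0 1) x - E = f x

namespace IsPeriodicSolution

variable {c E : ℂ} {f ζ : ℝ → ℂ}

theorem contDiffOn_derivWithin (h : IsPeriodicSolution c f ζ E) :
    ContDiffOn ℝ 1 (derivWithin ζ (Icc 0 1)) (Icc 0 1) :=
  h.contDiffOn.derivWithin (uniqueDiffOn_Icc zero_lt_one) le_rfl

theorem hasDerivWithinAt (h : IsPeriodicSolution c f ζ E) {x : ℝ} (hx : x ∈ Icc (0:ℝ) 1) :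
    HasDerivWithinAt ζ (derivWithin ζ (Icc 0 1) x) (Icc 0 1) x :=
  (h.contDiffOn.differentiableOn two_ne_zero x hx).hasDerivWithinAt

theorem hasDerivWithinAt_derivWithin (h : IsPeriodicSolution c f ζ E) {x : ℝ}
    (hx : x ∈ Icc (0:ℝ) 1) :
    HasDerivWithinAt (derivWithin ζ (Icc 0 1))
      (derivWithin (derivWithin ζ (Icc 0 1)) (Icc 0 1) x) (Icc 0 1) x :=
  (h.contDiffOn_derivWithin.differentiableOn one_ne_zero x hx).hasDerivWithinAt

theorem eq_neg_integral (h : IsPeriodicSolution c f ζ E) : E = -∫ x in (0:ℝ)..1, f x := by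
  have hζ' := h.contDiffOn_derivWithin
  have hζ'' : ContinuousOn (derivWithin (derivWithin ζ (Icc 0 1)) (Icc 0 1)) (Icc 0 1) :=
    (hζ'.derivWithin (uniqueDiffOn_Icc zero_lt_one) le_rfl).continuousOn (n := 0)
  have hi' := hζ'.continuousOn.intervalIntegrable_of_Icc (μ := volume) zero_le_one
  have hi'' := hζ''.intervalIntegrable_of_Icc (μ := volume) zero_le_one
  have hode : ∫ x in (0:ℝ)..1, f x = ∫ x in (0:ℝ)..1,
      (-derivWithin (derivWithin ζ (Icc 0 1)) (Icc 0 1) x - c * derivWithin ζ (Icc 0 1) x - E) :=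
    intervalIntegral.integral_congr fun x hx =>
      (h.ode x (by rwa [uIcc_of_le zero_le_one] at hx)).symm
  rw [hode, intervalIntegral.integral_sub, intervalIntegral.integral_sub,
    intervalIntegral.integral_neg, intervalIntegral.integral_const_mul,
    intervalIntegral.integral_derivWithin_Icc_of_contDiffOn_Icc hζ' zero_le_one,
    intervalIntegral.integral_derivWithin_Icc_of_contDiffOn_Icc (h.contDiffOn.of_le one_le_two)
      zero_le_one, intervalIntegral.integral_const, h.periodic, h.derivWithin_periodic]
  exacts [by simp, hi''.neg, hi'.const_mul c, hi''.neg.sub (hi'.const_mul c),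
    intervalIntegrable_const]

/-- The difference of the derivatives solves `v' = -c v` periodically, so it vanishes; the
difference of the solutions is then a constant with zero mean. -/
theorem eqOn {ζ₂ : ℝ → ℂ} {E₂ : ℂ} (hc : Complex.exp c ≠ 1) (h₁ : IsPeriodicSolution c f ζ E)
    (h₂ : IsPeriodicSolution c f ζ₂ E₂)
    (hint : ∫ x in (0:ℝ)..1, ζ x = ∫ x in (0:ℝ)..1, ζ₂ x) : EqOn ζ ζ₂ (Icc 0 1) := by
  have hE : E = E₂ := h₁.eq_neg_integral.trans h₂.eq_neg_integral.symm
  have hv : EqOn (fun x => derivWithin ζ (Icc 0 1) x - derivWithin ζ₂ (Icc 0 1) x) 0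
      (Icc 0 1) := by
    refine eqOn_zero_of_hasDerivWithinAt_neg_mul hc (fun x hx => ?_)
      (by rw [h₁.derivWithin_periodic, h₂.derivWithin_periodic])
    refine ((h₁.hasDerivWithinAt_derivWithin hx).fun_sub
      (h₂.hasDerivWithinAt_derivWithin hx)).congr_deriv ?_
    linear_combination h₂.ode x hx - h₁.ode x hx - hE
  have hconst := constant_of_hasDerivWithinAt_zero (f := fun x => ζ x - ζ₂ x) fun x hx => by
    simpa [sub_eq_zero.1 (hv hx)] using (h₁.hasDerivWithinAt hx).fun_sub (h₂.hasDerivWithinAt hx)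
  have h0 : ζ 0 - ζ₂ 0 = 0 := by
    have hmean := intervalIntegral.integral_congr (μ := volume) (g := fun _ => ζ 0 - ζ₂ 0)
      fun x hx => hconst x (by rwa [uIcc_of_le zero_le_one] at hx)
    rwa [intervalIntegral.integral_sub
      (h₁.contDiffOn.continuousOn.intervalIntegrable_of_Icc zero_le_one)
      (h₂.contDiffOn.continuousOn.intervalIntegrable_of_Icc zero_le_one), hint, sub_self,
      intervalIntegral.integral_const, sub_zero, one_smul, eq_comm] at hmean
  exact fun x hx => sub_eq_zero.1 ((hconst x hx).trans h0)

theorem of_hasDerivAt {u u' : ℝ → ℂ} (hζ : ∀ x, HasDerivAt ζ (u x) x)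
    (hu : ∀ x, HasDerivAt u (u' x) x) (hu' : Continuous u') (hper : ζ 0 = ζ 1)
    (hper' : u 0 = u 1) (hode : ∀ x ∈ Icc (0:ℝ) 1, -u' x - c * u x - E = f x) :
    IsPeriodicSolution c f ζ E := by
  have hU := uniqueDiffOn_Icc (zero_lt_one' ℝ)
  have hd : ∀ x ∈ Icc (0:ℝ) 1, derivWithin ζ (Icc 0 1) x = u x := fun x hx =>
    (hζ x).hasDerivWithinAt.derivWithin (hU x hx)
  have hdd : ∀ x ∈ Icc (0:ℝ) 1,
      derivWithin (derivWithin ζ (Icc 0 1)) (Icc 0 1) x = u' x := fun x hx => by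
    rw [derivWithin_congr hd (hd x hx)]
    exact (hu x).hasDerivWithinAt.derivWithin (hU x hx)
  refine ⟨(contDiff_two_of_hasDerivAt hζ hu hu').contDiffOn, hper, ?_, fun x hx => ?_⟩
  · rw [hd 0 (left_mem_Icc.2 zero_le_one), hd 1 (right_mem_Icc.2 zero_le_one), hper']
  · rw [hdd x hx, hd x hx, hode x hx]

end IsPeriodicSolution

theorem exists_isPeriodicSolution {c : ℂ} (hc : Complex.exp c ≠ 1) {f : ℝ → ℂ}
    (hf : ContinuousOn f (Icc 0 1)) (s : ℂ) :
    ∃ ζ, IsPeriodicSolution c f ζ (-∫ x in (0:ℝ)..1, f x) ∧ ∫ x in (0:ℝ)..1, ζ x = s := by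
  obtain ⟨g, hg, hgf⟩ : ∃ g : ℝ → ℂ, Continuous g ∧ EqOn g f (Icc 0 1) :=
    ⟨IccExtend zero_le_one ((Icc 0 1).domRestrict f), hf.domRestrict.Icc_extend',
      fun x hx => IccExtend_of_mem _ _ hx⟩
  set E := -∫ x in (0:ℝ)..1, f x
  have hmean : ∫ x in (0:ℝ)..1, -(g x + E) = 0 := by
    rw [intervalIntegral.integral_neg, intervalIntegral.integral_add (hg.intervalIntegrable _ _)
      intervalIntegrable_const, intervalIntegral.integral_congr (by rwa [uIcc_of_le zero_le_one]),
      intervalIntegral.integral_const]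
    simp [E]
  obtain ⟨u, hu, hper⟩ := exists_periodic_hasDerivAt_neg_mul_add hc (h := fun x => -(g x + E))
    (by fun_prop)
  have hu_cont : Continuous u := continuous_iff_continuousAt.2 fun x => (hu x).continuousAt
  have hu_mean : ∫ x in (0:ℝ)..1, u x = 0 := by
    have hftc := intervalIntegral.integral_eq_sub_of_hasDerivAt (fun x _ => hu x)
      ((by fun_prop : Continuous fun x => -c * u x + -(g x + E)).intervalIntegrable 0 1)
    rw [intervalIntegral.integral_add ((hu_cont.intervalIntegrable _ _).const_mul _)
      ((by fun_prop : Continuous fun x => -(g x + E)).intervalIntegrable 0 1),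
      intervalIntegral.integral_const_mul, hmean, add_zero, ← hper, sub_self] at hftc
    have hc0 : c ≠ 0 := by rintro rfl; exact hc Complex.exp_zero
    simpa [hc0] using hftc
  set Φ : ℝ → ℂ := fun x => ∫ t in (0:ℝ)..x, u t
  have hΦ : ∀ x, HasDerivAt Φ (u x) x := fun x =>
    (hu_cont.integral_hasStrictDerivAt 0 x).hasDerivAt
  have hΦ_cont : Continuous Φ := continuous_iff_continuousAt.2 fun x => (hΦ x).continuousAt
  refine ⟨fun x => s - (∫ y in (0:ℝ)..1, Φ y) + Φ x,
    .of_hasDerivAt (fun x => (hΦ x).const_add _) hu (by fun_prop) ?_ hper fun x hx => ?_, ?_⟩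
  · simp [Φ, hu_mean]
  · simp only [← hgf hx]
    ring
  · rw [intervalIntegral.integral_add intervalIntegrable_const (hΦ_cont.intervalIntegrable _ _),
      intervalIntegral.integral_const]
    simp

/-- **Solvability of the shifted periodic ODE.** Let `k ∈ ℝ` with `e^{2ik} ≠ 1`, let
`f : [0,1] → ℂ` be continuous and `σ ∈ ℂ`. Then there exists exactly one pair `(ζ, E)` with
`ζ` twice continuously differentiable on `[0,1]` and `E ∈ ℂ` such that `ζ(0) = ζ(1)`,
`ζ'(0) = ζ'(1)`, `−ζ''(x) − 2ik ζ'(x) − E = f(x)` on `[0,1]` and `2 ∫_0^1 ζ = σ`.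
Moreover, necessarily `E = −∫_0^1 f`. -/
theorem stmt18 (k : ℝ) (hk : Complex.exp (2 * Complex.I * k) ≠ 1)
    (f : ℝ → ℂ) (hf : ContinuousOn f (Icc (0:ℝ) 1)) (σ : ℂ) :
    (∃ (ζ : ℝ → ℂ) (E : ℂ),
      ContDiffOn ℝ 2 ζ (Icc (0:ℝ) 1) ∧
      ζ 0 = ζ 1 ∧
      derivWithin ζ (Icc (0:ℝ) 1) 0 = derivWithin ζ (Icc (0:ℝ) 1) 1 ∧
      (∀ x ∈ Icc (0:ℝ) 1,
        -(derivWithin (derivWithin ζ (Icc (0:ℝ) 1)) (Icc (0:ℝ) 1) x)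
          - 2 * Complex.I * k * derivWithin ζ (Icc (0:ℝ) 1) x - E = f x) ∧
      2 * (∫ y in (0:ℝ)..1, ζ y) = σ) ∧
    (∀ (ζ₁ ζ₂ : ℝ → ℂ) (E₁ E₂ : ℂ),
      (ContDiffOn ℝ 2 ζ₁ (Icc (0:ℝ) 1) ∧
        ζ₁ 0 = ζ₁ 1 ∧
        derivWithin ζ₁ (Icc (0:ℝ) 1) 0 = derivWithin ζ₁ (Icc (0:ℝ) 1) 1 ∧
        (∀ x ∈ Icc (0:ℝ) 1,
          -(derivWithin (derivWithin ζ₁ (Icc (0:ℝ) 1)) (Icc (0:ℝ) 1) x)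
            - 2 * Complex.I * k * derivWithin ζ₁ (Icc (0:ℝ) 1) x - E₁ = f x) ∧
        2 * (∫ y in (0:ℝ)..1, ζ₁ y) = σ) →
      (ContDiffOn ℝ 2 ζ₂ (Icc (0:ℝ) 1) ∧
        ζ₂ 0 = ζ₂ 1 ∧
        derivWithin ζ₂ (Icc (0:ℝ) 1) 0 = derivWithin ζ₂ (Icc (0:ℝ) 1) 1 ∧
        (∀ x ∈ Icc (0:ℝ) 1,
          -(derivWithin (derivWithin ζ₂ (Icc (0:ℝ) 1)) (Icc (0:ℝ) 1) x)
            - 2 * Complex.I * k * derivWithin ζ₂ (Icc (0:ℝ) 1) x - E₂ = f x) ∧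
        2 * (∫ y in (0:ℝ)..1, ζ₂ y) = σ) →
      E₁ = E₂ ∧ EqOn ζ₁ ζ₂ (Icc (0:ℝ) 1)) ∧
    (∀ (ζ : ℝ → ℂ) (E : ℂ),
      (ContDiffOn ℝ 2 ζ (Icc (0:ℝ) 1) ∧
        ζ 0 = ζ 1 ∧
        derivWithin ζ (Icc (0:ℝ) 1) 0 = derivWithin ζ (Icc (0:ℝ) 1) 1 ∧
        (∀ x ∈ Icc (0:ℝ) 1,
          -(derivWithin (derivWithin ζ (Icc (0:ℝ) 1)) (Icc (0:ℝ) 1) x)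
            - 2 * Complex.I * k * derivWithin ζ (Icc (0:ℝ) 1) x - E = f x) ∧
        2 * (∫ y in (0:ℝ)..1, ζ y) = σ) →
      E = -∫ x in (0:ℝ)..1, f x) := by
  refine ⟨?_, ?_, ?_⟩
  · obtain ⟨ζ, hζ, hint⟩ := exists_isPeriodicSolution hk hf (σ / 2)
    exact ⟨ζ, _, hζ.contDiffOn, hζ.periodic, hζ.derivWithin_periodic, hζ.ode, by rw [hint]; ring⟩
  · rintro ζ₁ ζ₂ E₁ E₂ ⟨hζ₁, hper₁, hper₁', hode₁, hσ₁⟩ ⟨hζ₂, hper₂, hper₂', hode₂, hσ₂⟩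
    have h₁ : IsPeriodicSolution (2 * Complex.I * k) f ζ₁ E₁ := ⟨hζ₁, hper₁, hper₁', hode₁⟩
    have h₂ : IsPeriodicSolution (2 * Complex.I * k) f ζ₂ E₂ := ⟨hζ₂, hper₂, hper₂', hode₂⟩
    exact ⟨h₁.eq_neg_integral.trans h₂.eq_neg_integral.symm,
      h₁.eqOn hk h₂ (mul_left_cancel₀ two_ne_zero (hσ₁.trans hσ₂.symm))⟩
  · rintro ζ E ⟨hζ, hper, hper', hode, -⟩
    exact IsPeriodicSolution.eq_neg_integral (f := f) ⟨hζ, hper, hper', hode⟩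
end
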